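/- arXiv:1807.03295 — 14 statements merged into one kernel-verified Lean document; each statement's English description precedes it below -/
import Mathlib

section
/- Let S be an m × m complex matrix each of whose entries is 1 or −1. Then the Hadamard (entrywise) product S ∘ M is a complex special orthogonal matrix for every complex special orthogonal m × m matrix M, if and only if there exist u, v : Fin m → ℂ with all entries in {1, −1} such that S i j = u i * v j for all i, j, and ∏ i, u i = ∏ i, v i. (That is, the sign matrices stabilizing the special orthogonal group under Hadamard multiplication are exactly the rank-one sign matrices u vᵀ with equal sign products.) -/
open Matrix


namespace SignStab
variable {m : ℕ}

def splitEquiv (i₀ i₁ : Fin m) (h : i₀ ≠ i₁) :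
    (Fin 2 ⊕ {a : Fin m // a ≠ i₀ ∧ a ≠ i₁}) ≃ Fin m where
  toFun := Sum.elim ![i₀, i₁] Subtype.val
  invFun a := if h0 : a = i₀ then Sum.inl 0 else if h1 : a = i₁ then Sum.inl 1
    else Sum.inr ⟨a, h0, h1⟩
  left_inv := by
    rintro (t | ⟨a, ha0, ha1⟩)
    · fin_cases t
      · simp
      · simp [Ne.symm h]
    · simp [ha0, ha1]
  right_inv a := by
    by_cases h0 : a = i₀
    · simp [h0]
    · by_cases h1 : a = i₁ <;> simp [h0, h1, Ne.symm h]

lemma splitEquiv_symm0 (i₀ i₁ : Fin m) (h : i₀ ≠ i₁) :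
    (splitEquiv i₀ i₁ h).symm i₀ = Sum.inl 0 := by
  simp [splitEquiv, Equiv.symm]

lemma splitEquiv_symm1 (i₀ i₁ : Fin m) (h : i₀ ≠ i₁) :
    (splitEquiv i₀ i₁ h).symm i₁ = Sum.inl 1 := by
  simp [splitEquiv, Equiv.symm, Ne.symm h]

lemma splitEquiv_symm_other (i₀ i₁ : Fin m) (h : i₀ ≠ i₁) (a : Fin m)
    (h0 : a ≠ i₀) (h1 : a ≠ i₁) :
    (splitEquiv i₀ i₁ h).symm a = Sum.inr ⟨a, h0, h1⟩ := by
  simp [splitEquiv, Equiv.symm, h0, h1]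

lemma rot_ortho (σ c s : ℂ) (hσ2 : σ * σ = 1) (hcs : c * c + s * s = 1) :
    (!![c, s; -(σ*s), σ*c])ᵀ * !![c, s; -(σ*s), σ*c] = 1 := by
  have ht : (!![c, s; -(σ*s), σ*c])ᵀ = !![c, -(σ*s); s, σ*c] := by
    ext x y; fin_cases x <;> fin_cases y <;> rfl
  rw [ht]
  ext x y
  fin_cases x <;> fin_cases y <;>
    simp [Matrix.mul_apply, Fin.sum_univ_two, Matrix.one_apply]
  · linear_combination s*s*hσ2 + hcs
  · linear_combination (-(s*c))*hσ2
  · linear_combination (-(s*c))*hσ2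
  · linear_combination c*c*hσ2 + hcs

lemma rot_det (σ c s : ℂ) (hcs : c * c + s * s = 1) :
    (!![c, s; -(σ*s), σ*c]).det = σ := by
  rw [Matrix.det_fin_two_of]; linear_combination σ*hcs

lemma perm_ortho (n : Type*) [Fintype n] [DecidableEq n] (τ : Equiv.Perm n) :
    (τ.permMatrix ℂ)ᵀ * τ.permMatrix ℂ = 1 := by
  rw [← PEquiv.toMatrix_symm, ← Equiv.toPEquiv_symm, PEquiv.toMatrix_toPEquiv_mul]
  ext x y
  simp [Matrix.submatrix_apply, Equiv.toPEquiv_apply, Matrix.one_apply]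

lemma pair_const (S : Matrix (Fin m) (Fin m) ℂ)
    (hS : ∀ i j, S i j = 1 ∨ S i j = -1)
    (H : ∀ M : Matrix (Fin m) (Fin m) ℂ, Mᵀ * M = 1 → M.det = 1 →
        (Matrix.of fun i j => S i j * M i j)ᵀ * (Matrix.of fun i j => S i j * M i j) = 1)
    {j k : Fin m} (hjk : j ≠ k) (a b : Fin m) :
    S a j * S a k = S b j * S b k := by
  have key : ∀ i₀ i₁ : Fin m, S i₀ j * S i₀ k = -1 → S i₁ j * S i₁ k = 1 → False := by
    intro i₀ i₁ h0 h1
    have hne01 : i₀ ≠ i₁ := by rintro rfl; rw [h0] at h1; norm_num at h1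
    -- the permutation sending i₀ ↦ j, i₁ ↦ k
    set k' : Fin m := Equiv.swap i₀ j i₁ with hk'
    have hjk' : j ≠ k' := by
      intro hh
      have h2 : Equiv.swap i₀ j j = Equiv.swap i₀ j k' := by rw [hh]
      rw [Equiv.swap_apply_right, hk', Equiv.swap_apply_self] at h2
      exact hne01 h2
    set τ : Equiv.Perm (Fin m) := (Equiv.swap i₀ j).trans (Equiv.swap k' k) with hτ
    have hτ0 : τ i₀ = j := by
      simp only [hτ, Equiv.trans_apply, Equiv.swap_apply_left]
      exact Equiv.swap_apply_of_ne_of_ne hjk' hjk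
    have hτ1 : τ i₁ = k := by
      simp only [hτ, Equiv.trans_apply, ← hk', Equiv.swap_apply_left]
    have hsymmj : τ.symm j = i₀ := by rw [← hτ0, Equiv.symm_apply_apply]
    have hsymmk : τ.symm k = i₁ := by rw [← hτ1, Equiv.symm_apply_apply]
    -- sign parameter
    set σ : ℂ := ((Equiv.Perm.sign τ : ℤ) : ℂ) with hσdef
    have hσ : σ = 1 ∨ σ = -1 := by
      rcases Int.units_eq_one_or (Equiv.Perm.sign τ) with h | h <;> rw [hσdef, h] <;> norm_num
    have hσ2 : σ * σ = 1 := by rcases hσ with h | h <;> rw [h] <;> norm_num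
    have hcs : (3/5 : ℂ) * (3/5) + (4/5) * (4/5) = 1 := by norm_num
    set e := splitEquiv i₀ i₁ hne01 with he
    set R : Matrix (Fin 2) (Fin 2) ℂ := !![(3/5 : ℂ), 4/5; -(σ*(4/5)), σ*(3/5)] with hR
    set B : Matrix _ _ ℂ := Matrix.fromBlocks R 0 0
        (1 : Matrix {a : Fin m // a ≠ i₀ ∧ a ≠ i₁} {a : Fin m // a ≠ i₀ ∧ a ≠ i₁} ℂ) with hB
    set G : Matrix (Fin m) (Fin m) ℂ := B.submatrix e.symm e.symm with hG
    set M : Matrix (Fin m) (Fin m) ℂ := G * τ.permMatrix ℂ with hM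
    have hBtB : Bᵀ * B = 1 := by
      rw [hB, Matrix.fromBlocks_transpose, Matrix.fromBlocks_multiply]
      rw [hR, rot_ortho σ (3/5) (4/5) hσ2 hcs]
      simp [Matrix.fromBlocks_one]
    have hGtG : Gᵀ * G = 1 := by
      rw [hG, Matrix.transpose_submatrix, Matrix.submatrix_mul_equiv Bᵀ B _ e.symm _, hBtB,
        Matrix.submatrix_one_equiv]
    have hMtM : Mᵀ * M = 1 := by
      rw [hM, Matrix.transpose_mul]
      calc (τ.permMatrix ℂ)ᵀ * Gᵀ * (G * τ.permMatrix ℂ)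
          = (τ.permMatrix ℂ)ᵀ * ((Gᵀ * G) * τ.permMatrix ℂ) := by
            rw [Matrix.mul_assoc, Matrix.mul_assoc]
        _ = (τ.permMatrix ℂ)ᵀ * τ.permMatrix ℂ := by rw [hGtG, Matrix.one_mul]
        _ = 1 := perm_ortho _ τ
    have hdet : M.det = 1 := by
      rw [hM, Matrix.det_mul, hG, Matrix.det_submatrix_equiv_self, hB,
        Matrix.det_fromBlocks_zero₂₁, Matrix.det_one, mul_one, hR,
        rot_det σ (3/5) (4/5) hcs, Matrix.det_permutation]
      exact hσ2
    -- entries of M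
    have hMab : ∀ x y, M x y = G x (τ.symm y) := by
      intro x y
      rw [hM, PEquiv.mul_toMatrix_toPEquiv]
      rfl
    have hMi0j : M i₀ j = 3/5 := by
      rw [hMab, hsymmj, hG, Matrix.submatrix_apply, splitEquiv_symm0, hB]
      simp [Matrix.fromBlocks_apply₁₁, hR]
    have hMi0k : M i₀ k = 4/5 := by
      rw [hMab, hsymmk, hG, Matrix.submatrix_apply, splitEquiv_symm0, splitEquiv_symm1, hB]
      simp [Matrix.fromBlocks_apply₁₁, hR]
    have hMi1j : M i₁ j = -(σ*(4/5)) := by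
      rw [hMab, hsymmj, hG, Matrix.submatrix_apply, splitEquiv_symm1, splitEquiv_symm0, hB]
      simp [Matrix.fromBlocks_apply₁₁, hR]
    have hMi1k : M i₁ k = σ*(3/5) := by
      rw [hMab, hsymmk, hG, Matrix.submatrix_apply, splitEquiv_symm1, hB]
      simp [Matrix.fromBlocks_apply₁₁, hR]
    have hMaj : ∀ x, x ≠ i₀ → x ≠ i₁ → M x j = 0 ∧ M x k = 0 := by
      intro x hx0 hx1
      constructor <;>
        [rw [hMab, hsymmj, hG, Matrix.submatrix_apply, splitEquiv_symm_other i₀ i₁ hne01 x hx0 hx1,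
          splitEquiv_symm0, hB];
         rw [hMab, hsymmk, hG, Matrix.submatrix_apply, splitEquiv_symm_other i₀ i₁ hne01 x hx0 hx1,
          splitEquiv_symm1, hB]] <;>
        simp [Matrix.fromBlocks_apply₂₁]
    -- apply hypothesis
    have HM := H M hMtM hdet
    have hent : ((Matrix.of fun i j => S i j * M i j)ᵀ * (Matrix.of fun i j => S i j * M i j)) j k
        = (1 : Matrix (Fin m) (Fin m) ℂ) j k := by rw [HM]
    rw [Matrix.mul_apply, Matrix.one_apply_ne hjk] at hent
    simp only [Matrix.transpose_apply, Matrix.of_apply] at hent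
    have hzero : ∀ x ∈ Finset.univ, x ∉ ({i₀, i₁} : Finset (Fin m)) →
        S x j * M x j * (S x k * M x k) = 0 := by
      intro x _ hx
      simp only [Finset.mem_insert, Finset.mem_singleton, not_or] at hx
      rw [(hMaj x hx.1 hx.2).1, (hMaj x hx.1 hx.2).2]
      ring
    have hsum := Finset.sum_subset (Finset.subset_univ ({i₀, i₁} : Finset (Fin m))) hzero
    rw [← hsum, Finset.sum_pair hne01, hMi0j, hMi0k, hMi1j, hMi1k] at hent
    have hval : S i₀ j * (3/5 : ℂ) * (S i₀ k * (4/5))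
        + S i₁ j * (-(σ*(4/5))) * (S i₁ k * (σ*(3/5))) = -24/25 := by
      linear_combination (12/25) * h0 - (12/25) * (S i₁ j * S i₁ k) * hσ2 - (12/25) * h1
    rw [hval] at hent
    norm_num at hent
  have val : ∀ i, S i j * S i k = 1 ∨ S i j * S i k = -1 := by
    intro i; rcases hS i j with h | h <;> rcases hS i k with h' | h' <;> rw [h, h'] <;> norm_num
  rcases val a with ha | ha <;> rcases val b with hb | hb
  · rw [ha, hb]
  · exact absurd (key b a hb ha) id
  · exact absurd (key a b ha hb) id
  · rw [ha, hb]

end SignStab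

/-- A sign matrix `S` (entries `±1`) stabilizes the complex special orthogonal group
under Hadamard multiplication if and only if it is a rank-one sign matrix `u vᵀ`
with equal sign products `∏ u i = ∏ v i`. -/
theorem sign_matrix_stabilizes_SO_iff (m : ℕ) (S : Matrix (Fin m) (Fin m) ℂ)
    (hS : ∀ i j, S i j = 1 ∨ S i j = -1) :
    (∀ M : Matrix (Fin m) (Fin m) ℂ, Mᵀ * M = 1 → M.det = 1 →
        (Matrix.of fun i j => S i j * M i j)ᵀ * (Matrix.of fun i j => S i j * M i j) = 1 ∧
        (Matrix.of fun i j => S i j * M i j).det = 1)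
      ↔ ∃ u v : Fin m → ℂ,
          (∀ i, u i = 1 ∨ u i = -1) ∧ (∀ j, v j = 1 ∨ v j = -1) ∧
          (∀ i j, S i j = u i * v j) ∧ (∏ i, u i) = (∏ j, v j) := by
  constructor
  · intro H
    rcases Nat.eq_zero_or_pos m with hm | hm
    · subst hm
      exact ⟨fun _ => 1, fun _ => 1, fun i => Or.inl rfl, fun i => Or.inl rfl,
        fun i => i.elim0, by simp⟩
    · set z : Fin m := ⟨0, hm⟩ with hz
      have hgen : ∀ i p, S i z * S i p = S z z * S z p := by
        intro i p
        by_cases hp : p = z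
        · subst hp
          rcases hS i z with h | h <;> rcases hS z z with h' | h' <;> rw [h, h'] <;> norm_num
        · exact SignStab.pair_const S hS (fun M h1 h2 => (H M h1 h2).1) (fun h => hp h.symm) i z
      have hkey : ∀ i p, S i p = S i z * (S z z * S z p) := by
        intro i p
        have h1 := hgen i p
        have hsq : S i z * S i z = 1 := by
          rcases hS i z with h | h <;> rw [h] <;> norm_num
        calc S i p = (S i z * S i z) * S i p := by rw [hsq, one_mul]
          _ = S i z * (S i z * S i p) := by ring
          _ = S i z * (S z z * S z p) := by rw [h1]
      have Hdet := (H 1 (by simp) (by simp)).2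
      have hdiag : (Matrix.of fun i p => S i p * (1 : Matrix (Fin m) (Fin m) ℂ) i p)
          = Matrix.diagonal (fun i => S i i) := by
        ext i p
        by_cases h : i = p <;> simp [Matrix.one_apply, Matrix.diagonal, h]
      rw [hdiag, Matrix.det_diagonal] at Hdet
      refine ⟨fun i => S i z, fun p => S z z * S z p, fun i => hS i z, ?_, hkey, ?_⟩
      · intro p
        show S z z * S z p = 1 ∨ S z z * S z p = -1
        rcases hS z z with h | h <;> rcases hS z p with h' | h' <;> rw [h, h'] <;> norm_num
      · have hv2 : (∏ p, S z z * S z p) * (∏ p, S z z * S z p) = 1 := by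
          rw [← Finset.prod_mul_distrib]
          apply Finset.prod_eq_one
          intro p _
          rcases hS z z with h | h <;> rcases hS z p with h' | h' <;> rw [h, h'] <;> norm_num
        have hprod : (∏ i, S i z) * (∏ p, S z z * S z p) = 1 := by
          rw [← Finset.prod_mul_distrib, ← Hdet]
          exact Finset.prod_congr rfl fun i _ => (hkey i i).symm
        calc (∏ i, S i z) = (∏ i, S i z) * ((∏ p, S z z * S z p) * (∏ p, S z z * S z p)) := by
              rw [hv2, mul_one]
          _ = ((∏ i, S i z) * (∏ p, S z z * S z p)) * (∏ p, S z z * S z p) := by ring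
          _ = ∏ p, S z z * S z p := by rw [hprod, one_mul]
  · rintro ⟨u, v, hu, hv, huv, hprod⟩ M hMtM hdet
    have hu2 : ∀ i, u i * u i = 1 := fun i => by rcases hu i with h | h <;> rw [h] <;> norm_num
    have hv2 : ∀ i, v i * v i = 1 := fun i => by rcases hv i with h | h <;> rw [h] <;> norm_num
    have huu : Matrix.diagonal u * Matrix.diagonal u = 1 := by
      rw [Matrix.diagonal_mul_diagonal]
      have : (fun i => u i * u i) = fun _ => (1 : ℂ) := funext hu2
      rw [this, Matrix.diagonal_one]
    have hvv : Matrix.diagonal v * Matrix.diagonal v = 1 := by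
      rw [Matrix.diagonal_mul_diagonal]
      have : (fun i => v i * v i) = fun _ => (1 : ℂ) := funext hv2
      rw [this, Matrix.diagonal_one]
    have hA : (Matrix.of fun i p => S i p * M i p)
        = Matrix.diagonal u * M * Matrix.diagonal v := by
      ext i p
      simp [Matrix.mul_diagonal, Matrix.diagonal_mul, huv i p]
      ring
    constructor
    · rw [hA, Matrix.transpose_mul, Matrix.transpose_mul, Matrix.diagonal_transpose,
        Matrix.diagonal_transpose]
      calc Matrix.diagonal v * (Mᵀ * Matrix.diagonal u) * (Matrix.diagonal u * M * Matrix.diagonal v)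
          = Matrix.diagonal v * (Mᵀ * ((Matrix.diagonal u * Matrix.diagonal u) * M)) *
            Matrix.diagonal v := by
            simp only [Matrix.mul_assoc]
        _ = Matrix.diagonal v * (Mᵀ * M) * Matrix.diagonal v := by rw [huu, Matrix.one_mul]
        _ = Matrix.diagonal v * Matrix.diagonal v := by rw [hMtM, Matrix.mul_one]
        _ = 1 := hvv
    · rw [hA, Matrix.det_mul, Matrix.det_mul, Matrix.det_diagonal, Matrix.det_diagonal, hdet,
        mul_one, hprod, ← Finset.prod_mul_distrib]
      exact Finset.prod_eq_one fun p _ => hv2 p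
end

section
/- Let r be a positive integer and let f be a multivariate polynomial over ℂ in variables x_0, …, x_n that is irreducible (prime) and not associated to any variable x_i. Let F be a finite set of polynomials such that: every element of F equals τ·f for some r-th root-of-unity tuple τ; distinct elements of F are not associated to each other; and for every r-th root-of-unity tuple τ, the polynomial τ·f is associated to some element of F. Set g := ∏_{h ∈ F} h. Then: (a) g lies in the ℂ-subalgebra A of the polynomial ring generated by x_0^r, …, x_n^r; and (b) for every h ∈ A, f divides h in the full polynomial ring if and only if there exists q ∈ A with h = q * g. (That is, the ideal (f) ∩ ℂ[x_0^r, …, x_n^r] of the subring ℂ[x_0^r, …, x_n^r] is principal, generated by the product over the orbit of f.) -/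
/-!
Rescaling by a root-of-unity tuple permutes the members of `F` up to scalars, so it sends `g` to
a scalar multiple of itself. Rescaling only `X i` by a primitive `r`-th root of unity `ζ`
multiplies the coefficient of `x^d` by `ζ ^ d i`; since no variable divides `g` (`f` is not
associated to one), some monomial of `g` avoids `X i`, which forces the scalar to be `1` and then
`r ∣ d i` for every monomial `x^d` of `g`. For (b): if `f ∣ h` with `h` invariant, every rescaling
of `f` divides `h`; these are pairwise non-associated primes, so `g ∣ h`, and the quotient is
again invariant, hence again a polynomial in the `X i ^ r`.
-/

open MvPolynomial

theorem Finset.prod_dvd_of_prime_of_pairwise_not_associated {M₀ : Type*} [CommMonoidWithZero M₀]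
    [IsCancelMulZero M₀] {s : Finset M₀} {x : M₀} (hp : ∀ p ∈ s, Prime p)
    (hs : ∀ p ∈ s, ∀ q ∈ s, p ≠ q → ¬ Associated p q) (hx : ∀ p ∈ s, p ∣ x) :
    ∏ p ∈ s, p ∣ x := by
  classical
  refine Multiset.prod_primes_dvd x (by simpa using hp) (by simpa using hx) fun a => ?_
  rw [Multiset.map_id', Multiset.countP_eq_card_filter, ← Finset.filter_val, Finset.card_val,
    Finset.card_le_one]
  intro p hp q hq
  rw [Finset.mem_filter] at hp hq
  by_contra hpq
  exact hs p hp.1 q hq.1 hpq (hp.2.symm.trans hq.2)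

namespace MvPolynomial

variable {σ R : Type*}

section CommSemiring

variable [CommSemiring R]

variable (σ R) in
noncomputable def adjoinXPow (r : ℕ) : Subalgebra R (MvPolynomial σ R) :=
  Algebra.adjoin R (Set.range fun i => X i ^ r)

noncomputable def scale (τ : σ → R) : MvPolynomial σ R →ₐ[R] MvPolynomial σ R :=
  aeval fun i => τ i • X i

@[simp] lemma scale_X (τ : σ → R) (i : σ) : scale τ (X i) = τ i • X i := aeval_X _ _

lemma scale_scale (τ τ' : σ → R) (p : MvPolynomial σ R) :
    scale τ (scale τ' p) = scale (τ * τ') p := by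
  rw [← AlgHom.comp_apply]
  congr 1
  ext i : 1
  simp [smul_smul, mul_comm]

@[simp] lemma scale_one (p : MvPolynomial σ R) : scale 1 p = p := by
  rw [show scale (1 : σ → R) = AlgHom.id R _ from algHom_ext fun i => by simp]
  rfl

lemma scale_monomial (τ : σ → R) (e : σ →₀ ℕ) (a : R) :
    scale τ (monomial e a) = monomial e ((e.prod fun i k => τ i ^ k) * a) := by
  have hpow : ∀ i k, (τ i • X i : MvPolynomial σ R) ^ k = C (τ i ^ k) * X i ^ k := by
    intro i k; rw [smul_pow, smul_eq_C_mul]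
  rw [scale, aeval_monomial, monomial_eq]
  simp only [hpow, Finsupp.prod_mul, ← map_finsuppProd, algebraMap_eq, C_mul]
  ring

lemma coeff_scale (τ : σ → R) (p : MvPolynomial σ R) (d : σ →₀ ℕ) :
    coeff d (scale τ p) = (d.prod fun i k => τ i ^ k) * coeff d p := by
  classical
  induction p using MvPolynomial.induction_on' with
  | monomial e a =>
    rw [scale_monomial, coeff_monomial, coeff_monomial]
    split_ifs with h <;> simp [h]
  | add p q hp hq => rw [map_add, coeff_add, coeff_add, hp, hq, mul_add]

lemma prod_pow_mulSingle [DecidableEq σ] (i : σ) (ζ : R) (d : σ →₀ ℕ) :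
    (d.prod fun j k => (Pi.mulSingle i ζ : σ → R) j ^ k) = ζ ^ d i := by
  rw [Finsupp.prod, Finset.prod_eq_single i (fun j _ hji => by simp [hji])
    fun hi => by simp [Finsupp.notMem_support_iff.mp hi]]
  simp

lemma mulSingle_pow_eq_one [DecidableEq σ] {r : ℕ} {ζ : R} (hζ : ζ ^ r = 1) (i j : σ) :
    (Pi.mulSingle i ζ : σ → R) j ^ r = 1 := by
  rw [← Pi.pow_apply, ← Pi.mulSingle_pow, hζ, Pi.mulSingle_one, Pi.one_apply]

lemma X_dvd_of_forall_mem_support (i : σ) {p : MvPolynomial σ R}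
    (hp : ∀ d ∈ p.support, d i ≠ 0) : X i ∣ p := by
  rw [p.as_sum]
  exact Finset.dvd_sum fun d hd => X_dvd_monomial.mpr (Or.inr (hp d hd))

lemma scale_eq_self_of_mem_adjoinXPow {r : ℕ} {τ : σ → R} (hτ : ∀ i, τ i ^ r = 1)
    {p : MvPolynomial σ R} (hp : p ∈ adjoinXPow σ R r) :
    scale τ p = p := by
  induction hp using Algebra.adjoin_induction with
  | mem x hx =>
    obtain ⟨i, rfl⟩ := hx
    rw [map_pow, scale_X, smul_pow, hτ i, one_smul]
  | algebraMap c => exact (scale τ).commutes c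
  | add x y _ _ hx hy => rw [map_add, hx, hy]
  | mul x y _ _ hx hy => rw [map_mul, hx, hy]

lemma mem_adjoinXPow_of_forall_dvd {r : ℕ} {p : MvPolynomial σ R}
    (hp : ∀ d ∈ p.support, ∀ i, r ∣ d i) :
    p ∈ adjoinXPow σ R r := by
  rw [p.as_sum]
  refine Subalgebra.sum_mem _ fun d hd => ?_
  rw [monomial_eq, Finsupp.prod]
  refine Subalgebra.mul_mem _ (Subalgebra.algebraMap_mem _ _)
    (Subalgebra.prod_mem _ fun i _ => ?_)
  obtain ⟨k, hk⟩ := hp d hd i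
  rw [hk, pow_mul]
  exact Subalgebra.pow_mem _ (Algebra.subset_adjoin (Set.mem_range_self i)) k

end CommSemiring

section Domain

variable [CommRing R] [IsDomain R]

lemma prod_pow_eq_of_scale_eq_smul {τ : σ → R} {c : R} {p : MvPolynomial σ R}
    (h : scale τ p = c • p) {d : σ →₀ ℕ} (hd : d ∈ p.support) :
    (d.prod fun i k => τ i ^ k) = c := by
  have := congrArg (coeff d) h
  rw [coeff_scale, coeff_smul, smul_eq_mul] at this
  exact mul_right_cancel₀ (mem_support_iff.mp hd) this

variable {r : ℕ} {ζ : R}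

lemma dvd_of_scale_mulSingle_eq [DecidableEq σ] (hζ : IsPrimitiveRoot ζ r) {i : σ}
    {p : MvPolynomial σ R}
    (h : scale (Pi.mulSingle i ζ) p = p) {d : σ →₀ ℕ} (hd : d ∈ p.support) : r ∣ d i := by
  have := prod_pow_eq_of_scale_eq_smul (c := 1) (by rwa [one_smul]) hd
  rw [prod_pow_mulSingle] at this
  exact (hζ.pow_eq_one_iff_dvd _).mp this

lemma scale_mulSingle_eq_of_eq_smul [DecidableEq σ] {i : σ} {c : R} {p : MvPolynomial σ R}
    (h : scale (Pi.mulSingle i ζ) p = c • p) (hX : ¬ X i ∣ p) :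
    scale (Pi.mulSingle i ζ) p = p := by
  obtain ⟨e, he, hei⟩ : ∃ e ∈ p.support, e i = 0 := by
    by_contra! hne
    exact hX (X_dvd_of_forall_mem_support i hne)
  have hc := prod_pow_eq_of_scale_eq_smul h he
  rw [prod_pow_mulSingle, hei, pow_zero] at hc
  rw [h, ← hc, one_smul]

lemma mem_adjoinXPow_of_scale_mulSingle_eq [DecidableEq σ] (hζ : IsPrimitiveRoot ζ r)
    {p : MvPolynomial σ R}
    (h : ∀ i, scale (Pi.mulSingle i ζ) p = p) :
    p ∈ adjoinXPow σ R r :=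
  mem_adjoinXPow_of_forall_dvd fun _ hd i => dvd_of_scale_mulSingle_eq hζ (h i) hd

lemma mem_adjoinXPow_of_mul_mem (hζ : IsPrimitiveRoot ζ r) {g q : MvPolynomial σ R}
    (hg : g ∈ adjoinXPow σ R r) (hg0 : g ≠ 0) (hgq : g * q ∈ adjoinXPow σ R r) :
    q ∈ adjoinXPow σ R r := by
  classical
  refine mem_adjoinXPow_of_scale_mulSingle_eq hζ fun i => mul_left_cancel₀ hg0 ?_
  have hτ := mulSingle_pow_eq_one hζ.pow_eq_one i
  calc g * scale (Pi.mulSingle i ζ) q = scale (Pi.mulSingle i ζ) (g * q) := by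
        rw [map_mul, scale_eq_self_of_mem_adjoinXPow hτ hg]
    _ = g * q := scale_eq_self_of_mem_adjoinXPow hτ hgq

lemma exists_eq_smul_of_associated {p q : MvPolynomial σ R} (h : Associated p q) :
    ∃ c : R, q = c • p := by
  obtain ⟨u, rfl⟩ := h
  obtain ⟨c, -, hc⟩ := isUnit_iff_eq_C_of_isReduced.mp u.isUnit
  exact ⟨c, by rw [hc, smul_eq_C_mul, mul_comm]⟩

lemma mem_adjoinXPow_of_associated_scale [DecidableEq σ] (hζ : IsPrimitiveRoot ζ r)
    {p : MvPolynomial σ R}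
    (h : ∀ i, Associated p (scale (Pi.mulSingle i ζ) p)) (hX : ∀ i, ¬ X i ∣ p) :
    p ∈ adjoinXPow σ R r := by
  refine mem_adjoinXPow_of_scale_mulSingle_eq hζ fun i => ?_
  obtain ⟨c, hc⟩ := exists_eq_smul_of_associated (h i)
  exact scale_mulSingle_eq_of_eq_smul hc (hX i)

end Domain

section Field

variable {K : Type*} [Field K] {τ : σ → K}

lemma scale_inv_scale (hτ : ∀ i, τ i ≠ 0) (p : MvPolynomial σ K) :
    scale τ⁻¹ (scale τ p) = p := by
  rw [scale_scale, show τ⁻¹ * τ = 1 by ext i; exact inv_mul_cancel₀ (hτ i), scale_one]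

lemma scale_scale_inv (hτ : ∀ i, τ i ≠ 0) (p : MvPolynomial σ K) :
    scale τ (scale τ⁻¹ p) = p := by
  rw [scale_scale, show τ * τ⁻¹ = 1 by ext i; exact mul_inv_cancel₀ (hτ i), scale_one]

noncomputable def scaleEquiv (hτ : ∀ i, τ i ≠ 0) : MvPolynomial σ K ≃ₐ[K] MvPolynomial σ K :=
  AlgEquiv.ofAlgHom (scale τ) (scale τ⁻¹) (AlgHom.ext fun p => scale_scale_inv hτ p)
    (AlgHom.ext fun p => scale_inv_scale hτ p)

lemma prime_scale (hτ : ∀ i, τ i ≠ 0) {p : MvPolynomial σ K} (hp : Prime p) :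
    Prime (scale τ p) :=
  (MulEquiv.prime_iff (scaleEquiv hτ).toMulEquiv).mpr hp

lemma X_dvd_of_X_dvd_scale (hτ : ∀ i, τ i ≠ 0) {i : σ} {p : MvPolynomial σ K}
    (h : X i ∣ scale τ p) : X i ∣ p := by
  have h' := map_dvd (scale τ⁻¹) h
  rw [scale_inv_scale hτ, scale_X, smul_eq_C_mul] at h'
  exact (dvd_mul_left _ _).trans h'

structure IsOrbitTransversal (r : ℕ) (f : MvPolynomial σ K) (F : Finset (MvPolynomial σ K)) :
    Prop where
  mem_orbit : ∀ h ∈ F, ∃ τ : σ → K, (∀ i, τ i ^ r = 1) ∧ h = scale τ f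
  not_associated : ∀ h₁ ∈ F, ∀ h₂ ∈ F, h₁ ≠ h₂ → ¬ Associated h₁ h₂
  exists_associated : ∀ τ : σ → K, (∀ i, τ i ^ r = 1) → ∃ h ∈ F, Associated (scale τ f) h

namespace IsOrbitTransversal

variable {r : ℕ} {f : MvPolynomial σ K} {F : Finset (MvPolynomial σ K)}

lemma prime_of_mem (hT : IsOrbitTransversal r f F) (hr : r ≠ 0) (hf : Prime f)
    {h : MvPolynomial σ K} (hh : h ∈ F) : Prime h := by
  obtain ⟨τ, hτ, rfl⟩ := hT.mem_orbit h hh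
  exact prime_scale (fun i => (IsUnit.of_pow_eq_one (hτ i) hr).ne_zero) hf

lemma prod_dvd_iff (hT : IsOrbitTransversal r f F) (hr : r ≠ 0) (hf : Prime f)
    (x : MvPolynomial σ K) :
    ∏ h ∈ F, h ∣ x ↔ ∀ τ : σ → K, (∀ i, τ i ^ r = 1) → scale τ f ∣ x := by
  refine ⟨fun hx τ hτ => ?_, fun hx => ?_⟩
  · obtain ⟨h, hh, hassoc⟩ := hT.exists_associated τ hτ
    exact (hassoc.dvd.trans (Finset.dvd_prod_of_mem (fun h => h) hh)).trans hx
  · refine Finset.prod_dvd_of_prime_of_pairwise_not_associated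
      (fun h hh => hT.prime_of_mem hr hf hh) hT.not_associated fun h hh => ?_
    obtain ⟨τ, hτ, rfl⟩ := hT.mem_orbit h hh
    exact hx τ hτ

lemma dvd_prod (hT : IsOrbitTransversal r f F) : f ∣ ∏ h ∈ F, h := by
  obtain ⟨h, hh, hassoc⟩ := hT.exists_associated 1 fun _ => one_pow r
  rw [scale_one] at hassoc
  exact hassoc.dvd.trans (Finset.dvd_prod_of_mem (fun h => h) hh)

lemma prod_ne_zero (hT : IsOrbitTransversal r f F) (hr : r ≠ 0) (hf : Prime f) :
    ∏ h ∈ F, h ≠ 0 :=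
  Finset.prod_ne_zero_iff.mpr fun _ hh => (hT.prime_of_mem hr hf hh).ne_zero

lemma associated_scale_prod (hT : IsOrbitTransversal r f F) (hr : r ≠ 0) (hf : Prime f)
    (hτ : ∀ i, τ i ^ r = 1) : Associated (∏ h ∈ F, h) (scale τ (∏ h ∈ F, h)) := by
  have hdvd : ∀ τ : σ → K, (∀ i, τ i ^ r = 1) → ∏ h ∈ F, h ∣ scale τ (∏ h ∈ F, h) := by
    intro τ hτ
    refine (hT.prod_dvd_iff hr hf _).2 fun τ' hτ' => ?_
    have hττ' : τ * (τ⁻¹ * τ') = τ' := by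
      ext i
      exact mul_inv_cancel_left₀ (IsUnit.of_pow_eq_one (hτ i) hr).ne_zero _
    rw [← hττ', ← scale_scale]
    exact map_dvd _ ((hT.prod_dvd_iff hr hf _).1 dvd_rfl _ fun i => by
      simp [mul_pow, inv_pow, hτ i, hτ' i])
  refine associated_of_dvd_dvd (hdvd τ hτ) ?_
  have h := map_dvd (scale τ) (hdvd τ⁻¹ fun i => by simp [inv_pow, hτ i])
  rwa [scale_scale_inv fun i => (IsUnit.of_pow_eq_one (hτ i) hr).ne_zero] at h

lemma not_X_dvd_prod (hT : IsOrbitTransversal r f F) (hr : r ≠ 0) (hf : Prime f) {i : σ}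
    (hfX : ¬ Associated f (X i)) : ¬ X i ∣ ∏ h ∈ F, h := by
  intro hX
  obtain ⟨h, hh, hXh⟩ := X_prime.exists_mem_finset_dvd hX
  obtain ⟨τ, hτ, rfl⟩ := hT.mem_orbit h hh
  have hXf := X_dvd_of_X_dvd_scale (fun i => (IsUnit.of_pow_eq_one (hτ i) hr).ne_zero) hXh
  exact hfX (X_prime.associated_of_dvd hf hXf).symm

lemma prod_mem_adjoinXPow (hT : IsOrbitTransversal r f F) (hr : r ≠ 0) (hf : Prime f)
    (hfX : ∀ i, ¬ Associated f (X i)) {ζ : K} (hζ : IsPrimitiveRoot ζ r) :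
    ∏ h ∈ F, h ∈ adjoinXPow σ K r := by
  classical
  exact mem_adjoinXPow_of_associated_scale hζ
    (fun i => hT.associated_scale_prod hr hf (mulSingle_pow_eq_one hζ.pow_eq_one i))
    fun i => hT.not_X_dvd_prod hr hf (hfX i)

end IsOrbitTransversal

end Field

end MvPolynomial

/-- For an irreducible polynomial `f`, not associated to any variable, the product `g`
over a complete set of pairwise non-associated representatives of the orbit of `f`
under rescalings by `r`-th root-of-unity tuples is a polynomial in the `r`-th powers
of the variables, and it generates the ideal `(f) ∩ ℂ[x₀^r, …, xₙ^r]` of the subring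
`ℂ[x₀^r, …, xₙ^r]`. -/
theorem orbit_product_generates_contraction (r n : ℕ) (hr : 0 < r)
    (f : MvPolynomial (Fin (n + 1)) ℂ) (hf : Prime f)
    (hfx : ∀ i, ¬ Associated f (X i))
    (F : Finset (MvPolynomial (Fin (n + 1)) ℂ))
    (hF1 : ∀ h ∈ F, ∃ τ : Fin (n + 1) → ℂ, (∀ i, (τ i) ^ r = 1) ∧
        h = aeval (fun i => τ i • (X i : MvPolynomial (Fin (n + 1)) ℂ)) f)
    (hF2 : ∀ h₁ ∈ F, ∀ h₂ ∈ F, h₁ ≠ h₂ → ¬ Associated h₁ h₂)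
    (hF3 : ∀ τ : Fin (n + 1) → ℂ, (∀ i, (τ i) ^ r = 1) →
        ∃ h ∈ F, Associated (aeval (fun i => τ i • (X i : MvPolynomial (Fin (n + 1)) ℂ)) f) h)
    (g : MvPolynomial (Fin (n + 1)) ℂ) (hg : g = ∏ h ∈ F, h) :
    g ∈ Algebra.adjoin ℂ
        (Set.range fun i : Fin (n + 1) => (X i : MvPolynomial (Fin (n + 1)) ℂ) ^ r) ∧
      ∀ h ∈ Algebra.adjoin ℂ
          (Set.range fun i : Fin (n + 1) => (X i : MvPolynomial (Fin (n + 1)) ℂ) ^ r),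
        (f ∣ h ↔ ∃ q ∈ Algebra.adjoin ℂ
            (Set.range fun i : Fin (n + 1) => (X i : MvPolynomial (Fin (n + 1)) ℂ) ^ r),
          h = q * g) := by
  have hT : IsOrbitTransversal r f F := ⟨hF1, hF2, hF3⟩
  have hζ := Complex.isPrimitiveRoot_exp r hr.ne'
  have hgA := hT.prod_mem_adjoinXPow hr.ne' hf hfx hζ
  subst hg
  refine ⟨hgA, fun h hA => ⟨fun hfh => ?_, ?_⟩⟩
  · obtain ⟨q, rfl⟩ := (hT.prod_dvd_iff hr.ne' hf h).2 fun τ hτ => by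
      simpa only [scale_eq_self_of_mem_adjoinXPow hτ hA] using map_dvd (scale τ) hfh
    exact ⟨q, mem_adjoinXPow_of_mul_mem hζ hgA (hT.prod_ne_zero hr.ne' hf) hA, mul_comm _ _⟩
  · rintro ⟨q, -, rfl⟩
    exact hT.dvd_prod.trans (dvd_mul_left _ _)
end

section
/- Let r be a positive integer and let σ be the ℂ-algebra endomorphism of the multivariate polynomial ring in variables X_i, i ∈ Fin m, over ℂ determined by σ(X_i) = X_i ^ r. For every ideal I of this polynomial ring, the image under ψ_r of the affine zero locus Z(I) = {x : Fin m → ℂ | ∀ f ∈ I, f(x) = 0} satisfies ψ_r '' Z(I) = Z(σ⁻¹(J)), where J is the vanishing ideal of Z(I), i.e. J = {f | ∀ x ∈ Z(I), f(x) = 0}, and σ⁻¹(J) denotes the preimage ideal (comap) of J under σ. In particular, the image of any affine variety under the coordinate-wise r-th power map is Zariski closed, with defining equations obtained by pulling back the vanishing ideal along the substitution x_i ↦ x_i^r. -/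
open MvPolynomial

private lemma aeval_eq_eval'' {m : ℕ} (x : Fin m → ℂ) (p : MvPolynomial (Fin m) ℂ) :
    aeval x p = eval x p := by
  rw [aeval_def]; rfl

private noncomputable def tw {m : ℕ} (a : Fin m → ℂ) :
    MvPolynomial (Fin m) ℂ →ₐ[ℂ] MvPolynomial (Fin m) ℂ :=
  aeval fun i => MvPolynomial.C (a i) * X i

private lemma eval_tw {m : ℕ} (a x : Fin m → ℂ) (p : MvPolynomial (Fin m) ℂ) :
    eval x (tw a p) = eval (fun i => a i * x i) p := by
  rw [tw, ← aeval_eq_eval'', comp_aeval_apply]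
  simp only [map_mul, aeval_C, aeval_X, Algebra.algebraMap_self_apply]
  rw [aeval_eq_eval'']

private lemma eval_sigma {m r : ℕ} (x : Fin m → ℂ) (q : MvPolynomial (Fin m) ℂ) :
    eval x ((aeval fun i => (X i : MvPolynomial (Fin m) ℂ) ^ r) q)
      = eval (fun i => x i ^ r) q := by
  rw [← aeval_eq_eval'', comp_aeval_apply]
  simp only [map_pow, aeval_X]
  rw [aeval_eq_eval'']

private lemma tw_tw {m : ℕ} (a b : Fin m → ℂ) (p : MvPolynomial (Fin m) ℂ) :
    tw a (tw b p) = tw (fun i => a i * b i) p := by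
  rw [tw, tw, tw, comp_aeval_apply]
  have : (fun i => (aeval fun i => MvPolynomial.C (a i) * X i) (MvPolynomial.C (b i) * X i))
      = fun i => MvPolynomial.C (a i * b i) * (X i : MvPolynomial (Fin m) ℂ) := by
    funext i; simp [mul_comm, mul_left_comm, mul_assoc]
  rw [this]

private lemma tw_one {m : ℕ} (p : MvPolynomial (Fin m) ℂ) : tw (fun _ => 1) p = p := by
  simp [tw]

private lemma tw_monomial {m : ℕ} (a : Fin m → ℂ) (d : Fin m →₀ ℕ) (c : ℂ) :
    tw a (monomial d c) = monomial d (c * ∏ i ∈ d.support, a i ^ d i) := by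
  rw [tw, aeval_monomial, monomial_eq]
  simp only [mul_pow, Finsupp.prod, Finset.prod_mul_distrib, ← MvPolynomial.C_pow,
    ← map_prod, algebraMap_eq, map_mul]
  ring

private lemma coeff_tw {m : ℕ} (a : Fin m → ℂ) (p : MvPolynomial (Fin m) ℂ) (d : Fin m →₀ ℕ) :
    coeff d (tw a p) = (∏ i ∈ d.support, a i ^ d i) * coeff d p := by
  conv_lhs => rw [p.as_sum, map_sum]
  rw [MvPolynomial.coeff_sum]
  simp only [tw_monomial, coeff_monomial]
  rw [Finset.sum_ite_eq' p.support d]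
  by_cases h : d ∈ p.support
  · simp [h, mul_comm]
  · simp [h, MvPolynomial.notMem_support_iff.mp h]

private lemma dvd_of_inv {m r : ℕ} (hr : 0 < r) (p : MvPolynomial (Fin m) ℂ)
    (hp : ∀ a : Fin m → ℂ, (∀ i, a i ^ r = 1) → tw a p = p)
    {d : Fin m →₀ ℕ} (hd : d ∈ p.support) (j : Fin m) : r ∣ d j := by
  have prim := Complex.isPrimitiveRoot_exp r hr.ne'
  set ζ := Complex.exp (2 * Real.pi * Complex.I / r) with hζ
  set a : Fin m → ℂ := fun i => if i = j then ζ else 1 with ha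
  have haroot : ∀ i, a i ^ r = 1 := by
    intro i
    by_cases h : i = j <;> simp [ha, h, prim.pow_eq_one]
  have h1 := congrArg (coeff d) (hp a haroot)
  rw [coeff_tw] at h1
  have hc : coeff d p ≠ 0 := MvPolynomial.mem_support_iff.mp hd
  have hprod : (∏ i ∈ d.support, a i ^ d i) = 1 := by
    by_contra hne
    exact hc (by
      have := sub_eq_zero.mpr h1
      rw [← sub_one_mul] at this
      rcases mul_eq_zero.mp this with h' | h'
      · exact absurd (sub_eq_zero.mp h') hne
      · exact h')
  by_cases hj : j ∈ d.support
  · have heq : (∏ i ∈ d.support, a i ^ d i) = a j ^ d j :=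
      Finset.prod_eq_single_of_mem j hj (fun b _ hbj => by simp [ha, hbj])
    rw [heq] at hprod
    simp only [ha, if_pos rfl] at hprod
    exact (prim.pow_eq_one_iff_dvd _).mp hprod
  · have : d j = 0 := Finsupp.notMem_support_iff.mp hj
    simp [this]

private lemma exists_sigma_preimage {m r : ℕ} (p : MvPolynomial (Fin m) ℂ)
    (hdvd : ∀ d ∈ p.support, ∀ j, r ∣ d j) :
    ∃ q : MvPolynomial (Fin m) ℂ,
      (aeval fun i => (X i : MvPolynomial (Fin m) ℂ) ^ r) q = p := by
  refine ⟨∑ d ∈ p.support, monomial (d.mapRange (· / r) (Nat.zero_div r)) (coeff d p), ?_⟩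
  rw [map_sum]
  conv_rhs => rw [p.as_sum]
  refine Finset.sum_congr rfl fun d hd => ?_
  rw [aeval_monomial, monomial_eq]
  congr 1
  rw [Finsupp.prod_fintype _ _ (fun i => by simp), Finsupp.prod_fintype _ _ (fun i => by simp)]
  refine Finset.prod_congr rfl fun i _ => ?_
  rw [Finsupp.mapRange_apply, ← pow_mul, Nat.mul_div_cancel' (hdvd d hd i)]

/-- The image of an affine variety `Z(I)` under the coordinate-wise `r`-th power map is
the zero locus of the preimage of the vanishing ideal `J` of `Z(I)` under the
substitution endomorphism `x_i ↦ x_i^r`. -/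
theorem image_coordinatewise_power_eq_zeroLocus_comap (r : ℕ) (hr : 0 < r) (m : ℕ)
    (I : Ideal (MvPolynomial (Fin m) ℂ)) (J : Ideal (MvPolynomial (Fin m) ℂ))
    (hJ : ∀ f : MvPolynomial (Fin m) ℂ, f ∈ J ↔
      ∀ x : Fin m → ℂ, (∀ g ∈ I, eval x g = 0) → eval x f = 0) :
    (fun x : Fin m → ℂ => fun i => (x i) ^ r) '' {x | ∀ g ∈ I, eval x g = 0}
      = {y : Fin m → ℂ | ∀ f ∈ Ideal.comap
            (aeval fun i => (X i : MvPolynomial (Fin m) ℂ) ^ r : MvPolynomial (Fin m) ℂ →ₐ[ℂ] MvPolynomial (Fin m) ℂ) J,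
          eval y f = 0} := by
  ext y
  simp only [Set.mem_image, Set.mem_setOf_eq]
  constructor
  · rintro ⟨x, hx, rfl⟩ f hf
    rw [Ideal.mem_comap] at hf
    have h0 := (hJ _).mp hf x hx
    rwa [eval_sigma] at h0
  · intro hy
    by_contra hcon
    push_neg at hcon
    -- the finite set of r-th root tuples of y
    set RS : Finset (Fin m → ℂ) :=
      Fintype.piFinset fun i => (Polynomial.nthRoots r (y i)).toFinset with hRS
    have mem_RS : ∀ x : Fin m → ℂ, x ∈ RS ↔ ∀ i, x i ^ r = y i := by
      intro x
      simp [hRS, Fintype.mem_piFinset, Multiset.mem_toFinset, Polynomial.mem_nthRoots hr]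
    have hIJ : ∀ g ∈ I, g ∈ J := fun g hg => (hJ g).mpr fun x hx => hx g hg
    -- find f ∈ J not vanishing at any root tuple
    have key : ∃ f ∈ J, ∀ x ∈ RS, eval x f ≠ 0 := by
      by_contra hk
      push_neg at hk
      set E := Submodule.restrictScalars ℂ J with hE
      let px : {x // x ∈ RS} → Submodule ℂ E := fun x =>
        (LinearMap.ker ((aeval (x : Fin m → ℂ) : MvPolynomial (Fin m) ℂ →ₐ[ℂ] ℂ).toLinearMap)).comap
          E.subtype
      have hcover : ⋃ x, (px x : Set E) = Set.univ := by
        ext f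
        simp only [Set.mem_iUnion, Set.mem_univ, iff_true, SetLike.mem_coe]
        have hfJ : (f : MvPolynomial (Fin m) ℂ) ∈ J := f.2
        obtain ⟨x, hxRS, hfx⟩ := hk f hfJ
        refine ⟨⟨x, hxRS⟩, ?_⟩
        simp only [px, Submodule.mem_comap, LinearMap.mem_ker, AlgHom.toLinearMap_apply,
          Submodule.coe_subtype]
        rw [aeval_eq_eval'']
        exact hfx
      obtain ⟨x0, hx0top⟩ := Subspace.exists_eq_top_of_iUnion_eq_univ hcover
      have hx0Z : ∀ g ∈ I, eval (x0 : Fin m → ℂ) g = 0 := by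
        intro g hg
        have hgE : g ∈ E := hIJ g hg
        have : (⟨g, hgE⟩ : E) ∈ px x0 := hx0top ▸ Submodule.mem_top
        simpa only [px, Submodule.mem_comap, LinearMap.mem_ker, AlgHom.toLinearMap_apply,
          Submodule.coe_subtype, aeval_eq_eval''] using this
      have := hcon x0 hx0Z
      exact this (funext fun i => (mem_RS x0).mp x0.2 i)
    obtain ⟨f, hfJ, hfne⟩ := key
    -- the group of r-th root-of-unity tuples
    set G : Finset (Fin m → ℂ) :=
      Fintype.piFinset fun _ => (Polynomial.nthRoots r (1 : ℂ)).toFinset with hG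
    have mem_G : ∀ a : Fin m → ℂ, a ∈ G ↔ ∀ i, a i ^ r = 1 := by
      intro a
      simp [hG, Fintype.mem_piFinset, Multiset.mem_toFinset, Polynomial.mem_nthRoots hr]
    set p : MvPolynomial (Fin m) ℂ := ∏ η ∈ G, tw η f with hp
    -- p is in J
    have h1G : (fun _ => (1:ℂ)) ∈ G := (mem_G _).mpr fun i => one_pow r
    have hpJ : p ∈ J := by
      rw [hp, ← Finset.mul_prod_erase G _ h1G, tw_one]
      exact J.mul_mem_right _ hfJ
    -- p is invariant under coordinate scaling by r-th roots of unity
    have hinv : ∀ a : Fin m → ℂ, (∀ i, a i ^ r = 1) → tw a p = p := by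
      intro a ha
      have haG : a ∈ G := (mem_G a).mpr ha
      have hane : ∀ i, a i ≠ 0 := fun i h0 => by
        have := ha i; rw [h0, zero_pow hr.ne'] at this; exact zero_ne_one this
      rw [hp, map_prod]
      simp only [tw_tw]
      refine Finset.prod_nbij' (fun η => fun i => a i * η i) (fun η => fun i => (a i)⁻¹ * η i)
        ?_ ?_ ?_ ?_ ?_
      · intro η hη
        refine (mem_G _).mpr fun i => ?_
        rw [mul_pow, ha i, (mem_G η).mp hη i, one_mul]
      · intro η hη
        refine (mem_G _).mpr fun i => ?_
        rw [mul_pow, inv_pow, ha i, inv_one, (mem_G η).mp hη i, one_mul]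
      · intro η _
        funext i; exact inv_mul_cancel_left₀ (hane i) _
      · intro η _
        funext i; exact mul_inv_cancel_left₀ (hane i) _
      · intro η _
        rfl
    -- obtain q with σ q = p
    obtain ⟨q, hq⟩ := exists_sigma_preimage p (fun d hd j => dvd_of_inv hr p hinv hd j)
    have hqK : q ∈ Ideal.comap
        (aeval fun i => (X i : MvPolynomial (Fin m) ℂ) ^ r :
          MvPolynomial (Fin m) ℂ →ₐ[ℂ] MvPolynomial (Fin m) ℂ) J := by
      rw [Ideal.mem_comap, hq]; exact hpJ
    have hy0 := hy q hqK
    -- choose a root tuple z of y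
    have hz : ∀ i, ∃ z : ℂ, z ^ r = y i := fun i => IsAlgClosed.exists_pow_nat_eq (y i) hr
    choose z hzz using hz
    have hyz : y = fun i => z i ^ r := funext fun i => (hzz i).symm
    have heval : eval y q = eval z p := by
      rw [hyz, ← eval_sigma z q, hq]
    have hne : eval z p ≠ 0 := by
      rw [hp, map_prod]
      refine Finset.prod_ne_zero_iff.mpr fun η hη => ?_
      rw [eval_tw]
      refine hfne _ ((mem_RS _).mpr fun i => ?_)
      rw [mul_pow, (mem_G η).mp hη i, one_mul, hzz i]
    exact hne (heval ▸ hy0)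
end

section
/- Let r be a positive integer and let f be a multivariate polynomial over ℂ in variables x_0, …, x_n that is irreducible (prime) and not associated to any variable x_i. Let F be a finite set of polynomials forming a complete set of pairwise non-associated representatives of the orbit {τ·f : τ an r-th root-of-unity tuple} (every element of F is of the form τ·f, distinct elements of F are non-associated, and every τ·f is associated to some element of F). Let p be any polynomial such that substituting x_i ↦ x_i^r into p yields ∏_{h ∈ F} h. Then ψ_r '' {x : Fin (n+1) → ℂ | f(x) = 0} = {y : Fin (n+1) → ℂ | p(y) = 0}. (The coordinate-wise r-th power of the hypersurface V(f) is the hypersurface defined by the polynomial obtained from the orbit product sym_r(f) by replacing each x_i^r with x_i.) -/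
/-!
Substituting `x_i ↦ x_i ^ r` in `p` gives `∏_{h ∈ F} h`, so `p` vanishes at `ψ_r x` exactly
when some `h = τ • f ∈ F` vanishes at `x`, i.e. when `f` vanishes at the coordinatewise product
`τ x`, whose `r`-th power is again `ψ_r x`. Since every `y` is some `ψ_r x` (`ℂ` is algebraically
closed), this describes `V(p)` as `ψ_r (V(f))`; the inclusion `ψ_r (V(f)) ⊆ V(p)` uses the member
of `F` associated to `f` itself.
-/

open MvPolynomial

namespace MvPolynomial

variable {R σ ι : Type*} [CommSemiring R]

theorem eval_aeval (x : ι → R) (g : σ → MvPolynomial ι R) (q : MvPolynomial σ R) :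
    eval x (aeval g q) = eval (fun i => eval x (g i)) q := by
  rw [aeval_eq_bind₁]
  exact eval₂Hom_bind₁ _ _ _ _

theorem eval_aeval_X_pow (r : ℕ) (x : σ → R) (q : MvPolynomial σ R) :
    eval x (aeval (fun i => (X i : MvPolynomial σ R) ^ r) q) = eval (fun i => x i ^ r) q := by
  simp only [eval_aeval, eval_pow, eval_X]

theorem eval_aeval_smul_X (τ x : σ → R) (q : MvPolynomial σ R) :
    eval x (aeval (fun i => τ i • (X i : MvPolynomial σ R)) q) = eval (τ * x) q := by
  simp only [eval_aeval, smul_eval, eval_X, Pi.mul_def]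

theorem aeval_one_smul_X (q : MvPolynomial σ R) :
    aeval (fun i => (1 : σ → R) i • (X i : MvPolynomial σ R)) q = q := by
  simp only [Pi.one_apply, one_smul, aeval_X_left_apply]

end MvPolynomial

theorem coordinatewise_power_hypersurface_general (r n : ℕ) (hr : 0 < r)
    (f : MvPolynomial (Fin (n + 1)) ℂ)
    (F : Finset (MvPolynomial (Fin (n + 1)) ℂ))
    (hF1 : ∀ h ∈ F, ∃ τ : Fin (n + 1) → ℂ, (∀ i, (τ i) ^ r = 1) ∧
        h = aeval (fun i => τ i • (X i : MvPolynomial (Fin (n + 1)) ℂ)) f)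
    (hF3 : ∀ τ : Fin (n + 1) → ℂ, (∀ i, (τ i) ^ r = 1) →
        ∃ h ∈ F, Associated (aeval (fun i => τ i • (X i : MvPolynomial (Fin (n + 1)) ℂ)) f) h)
    (p : MvPolynomial (Fin (n + 1)) ℂ)
    (hp : aeval (fun i => (X i : MvPolynomial (Fin (n + 1)) ℂ) ^ r) p = ∏ h ∈ F, h) :
    (fun x : Fin (n + 1) → ℂ => fun i => (x i) ^ r) '' {x | eval x f = 0}
      = {y : Fin (n + 1) → ℂ | eval y p = 0} := by
  have eval_p (x : Fin (n + 1) → ℂ) : eval (fun i => x i ^ r) p = ∏ h ∈ F, eval x h := by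
    rw [← eval_aeval_X_pow, hp, map_prod]
  ext y
  constructor
  · rintro ⟨x, hx, rfl⟩
    obtain ⟨h, hhF, u, rfl⟩ := hF3 1 fun _ => one_pow r
    rw [aeval_one_smul_X] at hhF
    rw [Set.mem_ofPred_eq, eval_p]
    exact Finset.prod_eq_zero hhF (by simp [hx.out])
  · intro hy
    choose x hx using fun i => IsAlgClosed.exists_pow_nat_eq (y i) hr
    obtain rfl : (fun i => x i ^ r) = y := funext hx
    rw [Set.mem_ofPred_eq, eval_p, Finset.prod_eq_zero_iff] at hy
    obtain ⟨h, hhF, hxh⟩ := hy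
    obtain ⟨τ, hτ, rfl⟩ := hF1 h hhF
    refine ⟨τ * x, (eval_aeval_smul_X τ x f).symm.trans hxh, funext fun i => ?_⟩
    simp only [Pi.mul_apply, mul_pow, hτ i, one_mul]

/-- The coordinate-wise `r`-th power of the hypersurface `V(f)` (for `f` irreducible and
not associated to a variable) is the hypersurface defined by the polynomial `p`
obtained from the orbit product `sym_r(f) = ∏_{h ∈ F} h` by replacing each `x_i^r`
by `x_i`. -/
theorem coordinatewise_power_hypersurface (r n : ℕ) (hr : 0 < r)
    (f : MvPolynomial (Fin (n + 1)) ℂ) (hf : Prime f)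
    (hfx : ∀ i, ¬ Associated f (X i))
    (F : Finset (MvPolynomial (Fin (n + 1)) ℂ))
    (hF1 : ∀ h ∈ F, ∃ τ : Fin (n + 1) → ℂ, (∀ i, (τ i) ^ r = 1) ∧
        h = aeval (fun i => τ i • (X i : MvPolynomial (Fin (n + 1)) ℂ)) f)
    (hF2 : ∀ h₁ ∈ F, ∀ h₂ ∈ F, h₁ ≠ h₂ → ¬ Associated h₁ h₂)
    (hF3 : ∀ τ : Fin (n + 1) → ℂ, (∀ i, (τ i) ^ r = 1) →
        ∃ h ∈ F, Associated (aeval (fun i => τ i • (X i : MvPolynomial (Fin (n + 1)) ℂ)) f) h)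
    (p : MvPolynomial (Fin (n + 1)) ℂ)
    (hp : aeval (fun i => (X i : MvPolynomial (Fin (n + 1)) ℂ) ^ r) p = ∏ h ∈ F, h) :
    (fun x : Fin (n + 1) → ℂ => fun i => (x i) ^ r) '' {x | eval x f = 0}
      = {y : Fin (n + 1) → ℂ | eval y p = 0} :=
  coordinatewise_power_hypersurface_general r n hr f F hF1 hF3 p hp
end

section
/- Let r be a positive integer and let I be a homogeneous ideal of the multivariate polynomial ring over ℂ in variables x_0, …, x_n. Then there exist finitely many homogeneous polynomials f_1, …, f_m generating I such that ψ_r '' Z(I) = ⋂_{i=1}^m ψ_r '' Z(f_i), where Z(J) denotes the affine zero locus in Fin (n+1) → ℂ. (Every homogeneous ideal admits an r-th power basis: a generating set whose hypersurface powers cut out exactly the coordinate-wise r-th power of the variety.) -/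
/-!
Let `G = μ_r^{n+1}` act on polynomials by scaling the variables; two points have the same
image under `ψ_r` exactly when they lie in one `G`-orbit. Take finitely many homogeneous
generators `gᵢ` of `I`. For every `c : G → {generators}` the twisted product
`q_c = ∏_{ζ ∈ G} ζ • g_{c ζ}` has all its translates in `I`, so the non-leading coefficients
of `∏_{ζ ∈ G} (T - ζ • q_c)` are `G`-invariant homogeneous elements of `I`; these are added to
the `gᵢ`. If `ψ_r x` lies in `ψ_r(Z(h))` for each such invariant `h`, then `h(x) = 0`, hence
every `q_c` vanishes at `x`. Were no translate `ζ • x` a common zero of the `gᵢ`, choosing for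
each `ζ` some `g_{c ζ}` with `g_{c ζ}(ζ • x) ≠ 0` would give `q_c(x) ≠ 0`.
-/

open MvPolynomial

namespace Polynomial

theorem coeff_prod_X_sub_C_mem {ι A : Type*} [CommRing A] {J : Ideal A} (s : Finset ι)
    {a : ι → A} (ha : ∀ i ∈ s, a i ∈ J) {k : ℕ} (hk : k < s.card) :
    (∏ i ∈ s, (X - C (a i))).coeff k ∈ J := by
  have hmap : (∏ i ∈ s, (X - C (a i))).map (Ideal.Quotient.mk J) = X ^ s.card := by
    rw [Polynomial.map_prod, ← Finset.prod_const, Finset.prod_congr rfl fun i hi => ?_]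
    rw [Polynomial.map_sub, map_X, map_C, Ideal.Quotient.eq_zero_iff_mem.2 (ha i hi), map_zero,
      sub_zero]
  rw [← Ideal.Quotient.eq_zero_iff_mem, ← coeff_map, hmap, coeff_X_pow, if_neg hk.ne]

theorem Monic.apply_eq_zero_of_isRoot {A B : Type*} [CommRing A] [CommRing B] [IsReduced B]
    {p : A[X]} (hp : p.Monic) {a : A} (ha : p.IsRoot a) (φ : A →+* B)
    (hφ : ∀ k < p.natDegree, φ (p.coeff k) = 0) : φ a = 0 := by
  have hmap : p.map φ = X ^ p.natDegree := by
    ext k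
    rw [coeff_map, coeff_X_pow]
    rcases lt_trichotomy k p.natDegree with hk | rfl | hk
    · rw [hφ k hk, if_neg hk.ne]
    · rw [hp.coeff_natDegree, map_one, if_pos rfl]
    · rw [coeff_eq_zero_of_natDegree_lt hk, map_zero, if_neg hk.ne']
  have := congrArg (eval (φ a)) hmap
  rw [eval_map, eval₂_at_apply, ha.eq_zero, map_zero, eval_pow, eval_X] at this
  exact eq_zero_of_pow_eq_zero this.symm

end Polynomial

namespace MvPolynomial

theorem isHomogeneous_coeff_prod_X_sub_C {ι σ R : Type*} [CommRing R] (s : Finset ι)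
    {a : ι → MvPolynomial σ R} {d : ℕ} (ha : ∀ i ∈ s, (a i).IsHomogeneous d) {k : ℕ}
    (hk : k ≤ s.card) :
    ((∏ i ∈ s, (Polynomial.X - Polynomial.C (a i))).coeff k).IsHomogeneous
      ((s.card - k) * d) := by
  simp_rw [sub_eq_add_neg, ← map_neg Polynomial.C]
  rw [Finset.prod_X_add_C_coeff s _ hk]
  refine IsHomogeneous.sum _ _ _ fun t ht => ?_
  obtain ⟨hts, hcard⟩ := Finset.mem_powersetCard.1 ht
  simpa [hcard] using IsHomogeneous.prod t _ (fun _ => d) fun i hi => (ha i (hts hi)).neg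

variable {σ R : Type*} [CommSemiring R]

noncomputable def scaleVars : (σ → R) →* (MvPolynomial σ R →ₐ[R] MvPolynomial σ R) where
  toFun v := aeval fun i => C (v i) * X i
  map_one' := by ext i; simp
  map_mul' v w := by ext i; simp [mul_comm, mul_left_comm]

theorem eval_scaleVars (v x : σ → R) (p : MvPolynomial σ R) :
    eval x (scaleVars v p) = eval (v * x) p := by
  change aeval x (aeval (fun i => C (v i) * X i) p) = aeval (v * x) p
  rw [← AlgHom.comp_apply, comp_aeval]
  congr 2
  ext i
  simp

theorem IsHomogeneous.scaleVars {p : MvPolynomial σ R} {d : ℕ} (hp : p.IsHomogeneous d)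
    (v : σ → R) : (MvPolynomial.scaleVars v p).IsHomogeneous d := by
  simpa [MvPolynomial.scaleVars] using hp.aeval _ fun i => isHomogeneous_C_mul_X (v i) i

end MvPolynomial

section OrbitPolynomial

open scoped Polynomial

variable {G R A : Type*} [Group G] [Fintype G] [CommSemiring R] [CommRing A] [Algebra R A]
  (ρ : G →* (A →ₐ[R] A))

noncomputable def orbitPoly (a : A) : A[X] := ∏ g, (Polynomial.X - Polynomial.C (ρ g a))

theorem orbitPoly_monic (a : A) : (orbitPoly ρ a).Monic :=
  Polynomial.monic_prod_of_monic _ _ fun _ _ => Polynomial.monic_X_sub_C _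

theorem natDegree_orbitPoly [Nontrivial A] (a : A) :
    (orbitPoly ρ a).natDegree = Fintype.card G := by
  rw [orbitPoly, Polynomial.natDegree_prod_of_monic _ _ fun _ _ => Polynomial.monic_X_sub_C _]
  simp

theorem isRoot_orbitPoly (a : A) : (orbitPoly ρ a).IsRoot a := by
  rw [Polynomial.IsRoot, orbitPoly, Polynomial.eval_prod]
  exact Finset.prod_eq_zero (Finset.mem_univ 1) (by simp)

theorem map_orbitPoly (g : G) (a : A) :
    (orbitPoly ρ a).map (ρ g : A →+* A) = orbitPoly ρ a := by
  rw [orbitPoly, Polynomial.map_prod]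
  refine Fintype.prod_equiv (Equiv.mulLeft g) _ _ fun h => ?_
  simp [← AlgHom.mul_apply, ← map_mul]

theorem apply_coeff_orbitPoly (g : G) (a : A) (k : ℕ) :
    ρ g ((orbitPoly ρ a).coeff k) = (orbitPoly ρ a).coeff k := by
  conv_rhs => rw [← map_orbitPoly ρ g a]
  rw [Polynomial.coeff_map]
  rfl

theorem coeff_orbitPoly_mem {J : Ideal A} {a : A} (ha : ∀ g, ρ g a ∈ J) {k : ℕ}
    (hk : k < Fintype.card G) : (orbitPoly ρ a).coeff k ∈ J :=
  Polynomial.coeff_prod_X_sub_C_mem _ (fun g _ => ha g) hk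

variable {ι : Type*}

noncomputable def twistProd (f : ι → A) (c : G → ι) : A := ∏ g, ρ g (f (c g))

theorem apply_twistProd_mem_span (f : ι → A) (c : G → ι) (g : G) :
    ρ g (twistProd ρ f c) ∈ Ideal.span (Set.range f) := by
  classical
  rw [twistProd, map_prod, ← Finset.mul_prod_erase _ _ (Finset.mem_univ g⁻¹),
    ← AlgHom.mul_apply, ← map_mul, mul_inv_cancel, map_one, AlgHom.one_apply]
  exact Ideal.mul_mem_right _ _ (Ideal.subset_span (Set.mem_range_self _))

theorem exists_forall_apply_eq_zero_of_twistProd {B : Type*} [CommRing B] [IsDomain B]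
    (φ : A →+* B) (f : ι → A) (h : ∀ c : G → ι, φ (twistProd ρ f c) = 0) :
    ∃ g : G, ∀ i, φ (ρ g (f i)) = 0 := by
  by_contra! hne
  choose c hc using hne
  exact Finset.prod_ne_zero_iff.2 (fun g _ => hc g) ((map_prod φ _ _).symm.trans (h c))

noncomputable def powerBasisFamily (f : ι → A) : ι ⊕ (G → ι) × Fin (Fintype.card G) → A :=
  Sum.elim f fun p => (orbitPoly ρ (twistProd ρ f p.1)).coeff p.2

theorem span_range_powerBasisFamily (f : ι → A) :
    Ideal.span (Set.range (powerBasisFamily ρ f)) = Ideal.span (Set.range f) := by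
  refine le_antisymm (Ideal.span_le.2 ?_) (Ideal.span_mono ?_)
  · rintro _ ⟨i | ⟨c, k⟩, rfl⟩
    · exact Ideal.subset_span (Set.mem_range_self i)
    · exact coeff_orbitPoly_mem ρ (apply_twistProd_mem_span ρ f c) k.2
  · rintro _ ⟨i, rfl⟩
    exact ⟨Sum.inl i, rfl⟩

end OrbitPolynomial

section Homogeneous

variable {G σ R ι : Type*} [Group G] [Fintype G] [CommRing R]
  {ρ : G →* (MvPolynomial σ R →ₐ[R] MvPolynomial σ R)}

theorem isHomogeneous_twistProd
    (hρ : ∀ g p d, IsHomogeneous p d → (ρ g p).IsHomogeneous d) {f : ι → MvPolynomial σ R}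
    {d : ι → ℕ} (hf : ∀ i, (f i).IsHomogeneous (d i)) (c : G → ι) :
    (twistProd ρ f c).IsHomogeneous (∑ g, d (c g)) :=
  IsHomogeneous.prod _ _ _ fun _ _ => hρ _ _ _ (hf _)

theorem exists_isHomogeneous_powerBasisFamily
    (hρ : ∀ g p d, IsHomogeneous p d → (ρ g p).IsHomogeneous d) {f : ι → MvPolynomial σ R}
    (hf : ∀ i, ∃ d, (f i).IsHomogeneous d) (u : ι ⊕ (G → ι) × Fin (Fintype.card G)) :
    ∃ d, (powerBasisFamily ρ f u).IsHomogeneous d := by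
  choose d hd using hf
  rcases u with i | ⟨c, k⟩
  · exact ⟨d i, hd i⟩
  · exact ⟨_, isHomogeneous_coeff_prod_X_sub_C _
      (fun g _ => hρ g _ _ (isHomogeneous_twistProd hρ hd c))
      (k.2.le.trans_eq Finset.card_univ.symm)⟩

end Homogeneous

section RootsOfUnity

variable {K σ : Type*} [Field K] {r : ℕ}

theorem exists_smul_eq_of_pow_eq_pow [NeZero r] {a b : K} (h : b ^ r = a ^ r) :
    ∃ ζ : rootsOfUnity r K, b = ζ • a := by
  by_cases ha : a = 0
  · subst ha
    exact ⟨1, by simpa [NeZero.ne r] using h⟩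
  · have hpow : (b / a) ^ r = 1 := by rw [div_pow, h, div_self (pow_ne_zero _ ha)]
    refine ⟨rootsOfUnity.mkOfPowEq _ hpow, ?_⟩
    rw [Subgroup.smul_def, Units.smul_def, rootsOfUnity.coe_mkOfPowEq, smul_eq_mul,
      div_mul_cancel₀ _ ha]

theorem Pi.exists_smul_eq_of_pow_eq_pow [NeZero r] {x y : σ → K} (h : y ^ r = x ^ r) :
    ∃ ζ : σ → rootsOfUnity r K, y = ζ • x := by
  choose ζ hζ using fun i =>
    _root_.exists_smul_eq_of_pow_eq_pow (a := x i) (b := y i) (congrFun h i)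
  exact ⟨ζ, funext hζ⟩

theorem smul_pow_rootsOfUnity (ζ : σ → rootsOfUnity r K) (x : σ → K) : (ζ • x) ^ r = x ^ r := by
  funext i
  have hζ : ζ i ^ r = 1 := Subtype.ext ((mem_rootsOfUnity _ _).1 (ζ i).2)
  simp [smul_pow, hζ]

variable (r) in
noncomputable def rootsScaling :
    (σ → rootsOfUnity r K) →* (MvPolynomial σ K →ₐ[K] MvPolynomial σ K) :=
  scaleVars.comp (MonoidHom.compLeft ((Units.coeHom K).comp (rootsOfUnity r K).subtype) σ)

theorem eval_rootsScaling (ζ : σ → rootsOfUnity r K) (x : σ → K) (p : MvPolynomial σ K) :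
    eval x (rootsScaling r ζ p) = eval (ζ • x) p := by
  rw [rootsScaling, MonoidHom.comp_apply, eval_scaleVars]
  rfl

theorem IsHomogeneous.rootsScaling {p : MvPolynomial σ K} {d : ℕ} (hp : p.IsHomogeneous d)
    (ζ : σ → rootsOfUnity r K) : (_root_.rootsScaling r ζ p).IsHomogeneous d :=
  hp.scaleVars _

theorem eval_eq_zero_of_pow_mem_image [NeZero r] {f : MvPolynomial σ K}
    (hf : ∀ ζ, rootsScaling r ζ f = f) {x : σ → K}
    (hx : x ^ r ∈ (· ^ r) '' {y | eval y f = 0}) : eval x f = 0 := by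
  obtain ⟨y, hy, hyx⟩ := hx
  obtain ⟨ζ, rfl⟩ := Pi.exists_smul_eq_of_pow_eq_pow hyx
  rwa [← hf ζ, eval_rootsScaling]

end RootsOfUnity

theorem image_pow_zeroLocus_span_eq_iInter {K σ ι : Type*} [Field K] [IsAlgClosed K] {r : ℕ}
    [NeZero r] [Fintype (σ → rootsOfUnity r K)] (f : ι → MvPolynomial σ K) :
    (· ^ r) '' {x : σ → K | ∀ p ∈ Ideal.span (Set.range f), eval x p = 0} =
      ⋂ u, (· ^ r) '' {x | eval x (powerBasisFamily (rootsScaling r) f u) = 0} := by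
  refine Set.Subset.antisymm (Set.subset_iInter fun u => Set.image_mono fun x hx => hx _ ?_) ?_
  · rw [← span_range_powerBasisFamily (rootsScaling r)]
    exact Ideal.subset_span ⟨u, rfl⟩
  intro y hy
  choose x hx using fun i => IsAlgClosed.exists_pow_nat_eq (y i) (NeZero.pos r)
  obtain rfl : x ^ r = y := funext hx
  have hcoeff (c) (k : Fin _) :
      eval x ((orbitPoly (rootsScaling r) (twistProd (rootsScaling r) f c)).coeff k) = 0 :=
    eval_eq_zero_of_pow_mem_image (fun ζ => apply_coeff_orbitPoly _ ζ _ _)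
      (Set.mem_iInter.1 hy (Sum.inr (c, k)))
  have htwist (c) : eval x (twistProd (rootsScaling r) f c) = 0 :=
    (orbitPoly_monic _ _).apply_eq_zero_of_isRoot (isRoot_orbitPoly _ _) (eval x) fun k hk =>
      hcoeff c ⟨k, natDegree_orbitPoly (rootsScaling (σ := σ) (K := K) r) _ ▸ hk⟩
  obtain ⟨ζ, hζ⟩ := exists_forall_apply_eq_zero_of_twistProd _ (eval x) f htwist
  have hker : Ideal.span (Set.range f) ≤ RingHom.ker (eval (ζ • x)) := by
    refine Ideal.span_le.2 ?_
    rintro _ ⟨i, rfl⟩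
    rw [SetLike.mem_coe, RingHom.mem_ker, ← eval_rootsScaling]
    exact hζ i
  exact ⟨ζ • x, fun p hp => hker hp, smul_pow_rootsOfUnity ζ x⟩

/-- Every homogeneous ideal admits an `r`-th power basis: a finite generating set of
homogeneous polynomials `f₁, …, f_k` such that the coordinate-wise `r`-th power of
`Z(I)` is exactly the intersection of the coordinate-wise `r`-th powers of the
hypersurfaces `Z(f_i)`. -/
theorem exists_power_basis (r n : ℕ) (hr : 0 < r)
    (I : Ideal (MvPolynomial (Fin (n + 1)) ℂ))
    (hI : ∃ S : Set (MvPolynomial (Fin (n + 1)) ℂ),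
      (∀ f ∈ S, ∃ d, f.IsHomogeneous d) ∧ I = Ideal.span S) :
    ∃ (k : ℕ) (f : Fin k → MvPolynomial (Fin (n + 1)) ℂ),
      (∀ i, ∃ d, (f i).IsHomogeneous d) ∧
      I = Ideal.span (Set.range f) ∧
      (fun x : Fin (n + 1) → ℂ => fun i => (x i) ^ r) '' {x | ∀ g ∈ I, eval x g = 0}
        = ⋂ i, (fun x : Fin (n + 1) → ℂ => fun j => (x j) ^ r) '' {x | eval x (f i) = 0} := by
  classical
  have : NeZero r := ⟨hr.ne'⟩
  have := Fintype.ofFinite (Fin (n + 1) → rootsOfUnity r ℂ)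
  obtain ⟨S, hS, rfl⟩ := hI
  obtain ⟨T, hTS, hT⟩ :=
    (Submodule.fg_span_iff_fg_span_finset_subset S).1 (IsNoetherian.noetherian (Ideal.span S))
  have hspan : Ideal.span S = Ideal.span (Set.range ((↑) : T → MvPolynomial _ ℂ)) := by
    rw [Subtype.range_coe]
    exact hT
  let b := powerBasisFamily (rootsScaling r) ((↑) : T → MvPolynomial (Fin (n + 1)) ℂ)
  refine ⟨_, b ∘ (Fintype.equivFin _).symm, fun i => ?_, ?_, ?_⟩
  · exact exists_isHomogeneous_powerBasisFamily (fun ζ _ _ hp => IsHomogeneous.rootsScaling hp ζ)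
      (fun p : T => hS p (hTS p.2)) _
  · rw [Set.range_comp, Equiv.range_eq_univ, Set.image_univ, span_range_powerBasisFamily, hspan]
  · rw [hspan]
    exact (image_pow_zeroLocus_span_eq_iInter _).trans ((Equiv.surjective _).iInter_comp _).symm
end

section
/- Let r be a positive integer, d a natural number, and let g_1, …, g_k be linearly independent homogeneous polynomials of degree d in the variables x_0, …, x_n over ℂ. Let f_1, …, f_M be polynomials lying in the ℂ-linear span of g_1, …, g_k, with M ≥ (k−1)·r^n + 1, such that every k-element subset of {f_1, …, f_M} is linearly independent. Then ⋂_{i=1}^M ψ_r '' {x : Fin (n+1) → ℂ | f_i(x) = 0} = ψ_r '' {x : Fin (n+1) → ℂ | g_1(x) = ⋯ = g_k(x) = 0}. (Taking (k−1)r^n + 1 sufficiently general linear combinations of k degree-d forms produces an r-th power basis of the ideal they generate.) -/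
/-! Each `f i` lies in the span of the degree-`d` forms `g j`, so it is homogeneous and its zero set
is a union of lines through the origin. Take `y` in every `ψ_r '' Z(f i)`, with witnesses `x i`.
The fiber of `ψ_r` over `y` meets at most `r ^ n` lines, so by pigeonhole `k` of the witnesses lie
on one line, spanned by a point `z` with `ψ_r z = y`, and the corresponding `k` forms vanish at `z`.
Being linearly independent in the span of the `g j`, whose dimension is at most `k`, these `k`
forms span it, so every `g j` vanishes at `z`. -/

open MvPolynomial Finset

theorem MvPolynomial.IsHomogeneous.eval_smul {σ R : Type*} [Fintype σ] [CommSemiring R]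
    {p : MvPolynomial σ R} {d : ℕ} (hp : p.IsHomogeneous d) (c : R) (x : σ → R) :
    eval (c • x) p = c ^ d * eval x p := by
  rw [eval_eq', eval_eq', mul_sum]
  refine sum_congr rfl fun m hm => ?_
  have hdeg : ∑ i, m i = d := by
    rw [← Finsupp.degree_eq_sum, Finsupp.degree_eq_weight_one]
    exact hp (mem_support_iff.mp hm)
  simp only [Pi.smul_apply, smul_eq_mul, mul_pow, prod_mul_distrib,
    prod_pow_eq_pow_sum, hdeg]
  ring

theorem MvPolynomial.IsHomogeneous.eval_smul_eq_zero_iff {σ K : Type*} [Fintype σ] [Field K]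
    {p : MvPolynomial σ K} {d : ℕ} (hp : p.IsHomogeneous d) {c : K} (hc : c ≠ 0) (x : σ → K) :
    eval (c • x) p = 0 ↔ eval x p = 0 := by
  rw [hp.eval_smul, mul_eq_zero_iff_left (pow_ne_zero d hc)]

theorem MvPolynomial.eval_eq_zero_of_mem_span {σ R : Type*} [CommSemiring R] {x : σ → R}
    {S : Set (MvPolynomial σ R)} (hS : ∀ q ∈ S, eval x q = 0) {p : MvPolynomial σ R}
    (hp : p ∈ Submodule.span R S) : eval x p = 0 := by
  induction hp using Submodule.span_induction with
  | mem q hq => exact hS q hq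
  | zero => exact map_zero _
  | add a b _ _ ha hb => rw [map_add, ha, hb, add_zero]
  | smul c a _ ha => rw [smul_eval, ha, mul_zero]

theorem span_range_eq_of_linearIndependent_of_card_le {K V ι κ : Type*} [DivisionRing K]
    [AddCommGroup V] [Module K V] [Fintype ι] [Fintype κ] {f : ι → V} {g : κ → V}
    (hf : LinearIndependent K f) (hcard : Fintype.card κ ≤ Fintype.card ι)
    (hfg : ∀ i, f i ∈ Submodule.span K (Set.range g)) :
    Submodule.span K (Set.range f) = Submodule.span K (Set.range g) := by
  have := FiniteDimensional.span_of_finite K (Set.finite_range g)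
  refine Submodule.eq_of_le_of_finrank_le (Submodule.span_le.mpr (Set.range_subset_iff.mpr hfg)) ?_
  rw [finrank_span_eq_card hf]
  exact (finrank_range_le_card g).trans hcard

theorem Polynomial.card_nthRootsFinset_le {R : Type*} [CommRing R] [IsDomain R] (n : ℕ) (a : R) :
    #(Polynomial.nthRootsFinset n a) ≤ n := by
  classical
  rw [Polynomial.nthRootsFinset_def]
  exact (Multiset.toFinset_card_le _).trans (Polynomial.card_nthRoots n a)

/-- Rescaling a point of the fiber so that a coordinate where `y` is nonzero becomes a fixed `r`-th
root leaves at most `r` choices for each of the other `n` coordinates. -/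
theorem exists_pow_fiber_subset_lines {K : Type*} [Field K] [IsAlgClosed K] {n r : ℕ}
    (hr : 0 < r) (y : Fin (n + 1) → K) :
    ∃ T : Finset (Fin (n + 1) → K), #T ≤ r ^ n ∧ (∀ z ∈ T, z ^ r = y) ∧
      ∀ x : Fin (n + 1) → K, x ^ r = y → ∃ z ∈ T, ∃ c : K, c ≠ 0 ∧ x = c • z := by
  classical
  by_cases hy : y = 0
  · subst hy
    refine ⟨{0}, by simpa using Nat.one_le_pow n r hr, by simp [hr.ne'], fun x hx => ?_⟩
    refine ⟨0, mem_singleton_self 0, 1, one_ne_zero, ?_⟩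
    funext j
    simpa [hr.ne'] using congr_fun hx j
  obtain ⟨j₀, hj₀⟩ : ∃ j, y j ≠ 0 := Function.ne_iff.mp hy
  obtain ⟨w, hw⟩ := IsAlgClosed.exists_pow_nat_eq (y j₀) hr
  have hw0 : w ≠ 0 := by rintro rfl; exact hj₀ (by simp [← hw, hr.ne'])
  let roots : Fin (n + 1) → Finset K := fun j =>
    if j = j₀ then {w} else Polynomial.nthRootsFinset r (y j)
  refine ⟨Fintype.piFinset roots, ?_, ?_, ?_⟩
  · rw [Fintype.card_piFinset, Fin.prod_univ_succAbove _ j₀]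
    simp only [roots, if_pos rfl, card_singleton, one_mul, Fin.succAbove_ne, if_false]
    simpa using prod_le_pow_card univ _ r
      fun i _ => Polynomial.card_nthRootsFinset_le r (y (j₀.succAbove i))
  · intro z hz
    funext j
    have := Fintype.mem_piFinset.mp hz j
    by_cases hj : j = j₀
    · subst hj; simp_all [roots]
    · simp_all [roots, Polynomial.mem_nthRootsFinset hr]
  · intro x hx
    have hxj (j) : x j ^ r = y j := congr_fun hx j
    have hx₀ : x j₀ ≠ 0 := by
      rintro h; exact hj₀ (by simp [← hxj j₀, h, hr.ne'])
    refine ⟨(w / x j₀) • x, Fintype.mem_piFinset.mpr fun j => ?_, x j₀ / w,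
      div_ne_zero hx₀ hw0, ?_⟩
    · by_cases hj : j = j₀
      · subst hj; simp [roots, hx₀]
      · rw [show roots j = _ from if_neg hj, Polynomial.mem_nthRootsFinset hr, Pi.smul_apply,
          smul_eq_mul, mul_pow, div_pow, hw, hxj, hxj, div_self hj₀, one_mul]
    · rw [smul_smul, div_mul_div_cancel₀ hw0, div_self hx₀, one_smul]

theorem general_combinations_power_basis_general (r : ℕ) (hr : 0 < r) (n d k M : ℕ)
    (g : Fin k → MvPolynomial (Fin (n + 1)) ℂ)
    (hg_hom : ∀ j, (g j).IsHomogeneous d)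
    (f : Fin M → MvPolynomial (Fin (n + 1)) ℂ)
    (hf_span : ∀ i, f i ∈ Submodule.span ℂ (Set.range g))
    (hM : (k - 1) * r ^ n + 1 ≤ M)
    (hf_li : ∀ s : Finset (Fin M), s.card = k →
      LinearIndependent ℂ (fun i : s => f i)) :
    (⋂ i, (fun x : Fin (n + 1) → ℂ => fun j => (x j) ^ r) '' {x | eval x (f i) = 0})
      = (fun x : Fin (n + 1) → ℂ => fun j => (x j) ^ r) ''
          {x | ∀ j, eval x (g j) = 0} := by
  classical
  have hf_hom (i : Fin M) : (f i).IsHomogeneous d :=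
    Submodule.span_le (p := homogeneousSubmodule _ ℂ d).mpr
      (Set.range_subset_iff.mpr hg_hom) (hf_span i)
  refine Set.Subset.antisymm (fun y hy => ?_) <| Set.subset_iInter fun i =>
    Set.image_mono fun x hx => eval_eq_zero_of_mem_span
      (Set.forall_mem_range.mpr hx) (hf_span i)
  choose x hx_zero hx_pow using Set.mem_iInter.mp hy
  obtain ⟨T, hT_card, hT_pow, hT_cover⟩ := exists_pow_fiber_subset_lines hr y
  choose z hzT c hc hxz using fun i => hT_cover (x i) (hx_pow i)
  obtain ⟨z₀, hz₀T, hfiber⟩ := exists_lt_card_fiber_of_mul_lt_card_of_maps_to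
    (s := univ) (fun i _ => hzT i) <| calc
      #T * (k - 1) ≤ r ^ n * (k - 1) := Nat.mul_le_mul_right _ hT_card
      _ < M := by rw [Nat.mul_comm]; omega
      _ = #univ := (card_fin M).symm
  obtain ⟨s, hs, hs_card⟩ := exists_subset_card_eq (show k ≤ #{i | z i = z₀} by omega)
  have hf_z₀ (i : s) : eval z₀ (f i) = 0 := by
    obtain ⟨-, hzi⟩ := mem_filter.mp (hs i.2)
    rw [← (hf_hom i).eval_smul_eq_zero_iff (hc i), ← hzi, ← hxz i]
    exact hx_zero i
  have hspan := span_range_eq_of_linearIndependent_of_card_le (hf_li s hs_card)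
    (by simp [hs_card]) fun i => hf_span i
  refine ⟨z₀, fun j => eval_eq_zero_of_mem_span (Set.forall_mem_range.mpr hf_z₀) ?_,
    hT_pow z₀ hz₀T⟩
  exact hspan ▸ Submodule.subset_span ⟨j, rfl⟩

/-- Taking `(k−1)·rⁿ + 1` linear combinations of `k` linearly independent degree-`d`
forms `g₁, …, g_k`, any `k` of which are linearly independent, produces an `r`-th
power basis: the intersection of the coordinate-wise `r`-th powers of the
hypersurfaces `Z(f_i)` equals the coordinate-wise `r`-th power of `Z(g₁, …, g_k)`. -/
theorem general_combinations_power_basis (r : ℕ) (hr : 0 < r) (n d k M : ℕ)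
    (g : Fin k → MvPolynomial (Fin (n + 1)) ℂ)
    (hg_hom : ∀ j, (g j).IsHomogeneous d)
    (hg_li : LinearIndependent ℂ g)
    (f : Fin M → MvPolynomial (Fin (n + 1)) ℂ)
    (hf_span : ∀ i, f i ∈ Submodule.span ℂ (Set.range g))
    (hM : (k - 1) * r ^ n + 1 ≤ M)
    (hf_li : ∀ s : Finset (Fin M), s.card = k →
      LinearIndependent ℂ (fun i : s => f i)) :
    (⋂ i, (fun x : Fin (n + 1) → ℂ => fun j => (x j) ^ r) '' {x | eval x (f i) = 0})
      = (fun x : Fin (n + 1) → ℂ => fun j => (x j) ^ r) ''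
          {x | ∀ j, eval x (g j) = 0} :=
  general_combinations_power_basis_general r hr n d k M g hg_hom f hf_span hM hf_li
end

section
/- Let s ≥ 4 and let A be a symmetric s × s complex matrix (Aᵀ = A). Then there exists μ ∈ ℂ such that the matrix A − μ • 1 has rank at most 1 (equivalently, A has an eigenspace of codimension at most 1) if and only if for all pairwise distinct indices i, j, k, ℓ ∈ Fin s the 2×2 minors of A satisfy: A_{ij|kℓ} = 0, A_{ik|iℓ} = A_{jk|jℓ}, and A_{ik|ik} − A_{iℓ|iℓ} = A_{jk|jk} − A_{jℓ|jℓ}. -/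
open Matrix

/-- The 2×2 minor of a square matrix `A` with rows `a, b` and columns `c, d`. -/
def minor2 {s : ℕ} (A : Matrix (Fin s) (Fin s) ℂ) (a b c d : Fin s) : ℂ :=
  A a c * A b d - A a d * A b c

/-!
The three relations on the minors, and the symmetry of `A`, are unchanged when `A` is replaced by
`B = A - μ • 1`. If `A` is diagonal, the third relation says that of two disjoint pairs of
diagonal entries one pair is equal, so the diagonal is constant, say `μ`, off a single index and
`A - μ • 1` has at most one nonzero entry. Otherwise pick `A p q ≠ 0` and choose `μ` with
`B w w * B p q = B w p * B w q` for one, hence by the second relation every, `w ∉ {p, q}`.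
The first relation propagates these identities `B i i * B k l = B i k * B i l` from the pair
`(p, q)` to every pair `(k, l)`, and they force the principal `2 × 2` minors of `B` to vanish,
except on an edge `{a, b}` isolated from the other indices, where the third relation takes over.
Then all `2 × 2` minors of `B` vanish.
-/

namespace Matrix

theorem rank_le_one_iff_mul_eq_mul {K m n : Type*} [Field K] [Fintype m] [Fintype n]
    (B : Matrix m n K) : B.rank ≤ 1 ↔ ∀ a b c d, B a c * B b d = B a d * B b c := by
  constructor
  · intro h a b c d
    by_contra hne
    have hdet : (B.submatrix ![a, b] ![c, d]).det ≠ 0 := by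
      rwa [det_fin_two, sub_ne_zero]
    have hrank : (B.submatrix ![a, b] ![c, d]).rank = 2 := by
      simpa using rank_of_isUnit _ ((isUnit_iff_isUnit_det _).2 hdet.isUnit)
    have := (B.rank_submatrix_le ![a, b] ![c, d]).trans h
    omega
  · intro h
    by_cases hB : B = 0
    · simp [hB]
    obtain ⟨p, q, hpq⟩ : ∃ p q, B p q ≠ 0 := by simpa [← Matrix.ext_iff] using hB
    have hvec : B = vecMulVec (fun i => B i q / B p q) (B p) := by
      ext i j
      rw [vecMulVec_apply, div_mul_eq_mul_div, eq_div_iff hpq, h i p j q]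
    exact hvec ▸ rank_vecMulVec_le _ _

variable {n R : Type*} [DecidableEq n] [Ring R] (A : Matrix n n R) (μ : R)

theorem sub_smul_one_apply_of_ne {i j : n} (h : i ≠ j) : (A - μ • 1) i j = A i j := by
  simp [h]

theorem sub_smul_one_apply_self (i : n) : (A - μ • 1) i i = A i i - μ := by
  simp

end Matrix

theorem exists_ne_ne_ne {α : Type*} [Fintype α] (h : 4 ≤ Fintype.card α) (a b c : α) :
    ∃ w, w ≠ a ∧ w ≠ b ∧ w ≠ c := by
  classical
  obtain ⟨w, -, hw⟩ := Finset.exists_mem_notMem_of_card_lt_card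
    (Finset.card_le_three.trans_lt h : Finset.card {a, b, c} < Finset.univ.card)
  exact ⟨w, by simpa only [Finset.mem_insert, Finset.mem_singleton, not_or] using hw⟩

theorem exists_forall_ne_eq_of_sub_mul_sub_eq_zero {α R : Type*} [Fintype α] [CommRing R]
    [NoZeroDivisors R] (h : 4 ≤ Fintype.card α) (d : α → R)
    (hd : ∀ i j k l, i ≠ j → i ≠ k → i ≠ l → j ≠ k → j ≠ l → k ≠ l →
      (d i - d j) * (d k - d l) = 0) :
    ∃ o μ, ∀ x, x ≠ o → d x = μ := by
  by_cases hconst : ∀ p q, d p = d q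
  · obtain ⟨o⟩ : Nonempty α := Fintype.card_pos_iff.1 (by omega)
    exact ⟨o, d o, fun x _ => hconst x o⟩
  push Not at hconst
  obtain ⟨p, q, hdpq⟩ := hconst
  have hpq : p ≠ q := by rintro rfl; exact hdpq rfl
  obtain ⟨k, hkp, hkq, -⟩ := exists_ne_ne_ne h p q p
  obtain ⟨l, hlp, hlq, hlk⟩ := exists_ne_ne_ne h p q k
  have hrest : ∀ x, x ≠ p → x ≠ q → d x = d k := fun x hxp hxq => by
    rcases eq_or_ne x k with rfl | hxk
    · rfl
    · have := hd p q x k hpq hxp.symm hkp.symm hxq.symm hkq.symm hxk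
      exact sub_eq_zero.1 ((mul_eq_zero.1 this).resolve_left (sub_ne_zero.2 hdpq))
  have hpk_or_qk := hd p k q l hkp.symm hpq hlp.symm hkq hlk.symm hlq.symm
  rw [hrest l hlp hlq] at hpk_or_qk
  rcases mul_eq_zero.1 hpk_or_qk with hp | hq
  · refine ⟨q, d k, fun x hxq => ?_⟩
    rcases eq_or_ne x p with rfl | hxp
    · exact sub_eq_zero.1 hp
    · exact hrest x hxp hxq
  · refine ⟨p, d k, fun x hxp => ?_⟩
    rcases eq_or_ne x q with rfl | hxq
    · exact sub_eq_zero.1 hq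
    · exact hrest x hxp hxq

section Minors

variable {s : ℕ}

def MinorRelations (A : Matrix (Fin s) (Fin s) ℂ) : Prop :=
  ∀ i j k l : Fin s, i ≠ j → i ≠ k → i ≠ l → j ≠ k → j ≠ l → k ≠ l →
    minor2 A i j k l = 0 ∧
    minor2 A i k i l = minor2 A j k j l ∧
    minor2 A i k i k - minor2 A i l i l = minor2 A j k j k - minor2 A j l j l

theorem rank_le_one_iff_forall_minor2_eq_zero (B : Matrix (Fin s) (Fin s) ℂ) :
    B.rank ≤ 1 ↔ ∀ a b c d, minor2 B a b c d = 0 := by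
  simp only [rank_le_one_iff_mul_eq_mul, minor2, sub_eq_zero]

theorem minorRelations_of_forall_minor2_eq_zero {B : Matrix (Fin s) (Fin s) ℂ}
    (h : ∀ a b c d, minor2 B a b c d = 0) : MinorRelations B := by
  intro i j k l _ _ _ _ _ _
  simp only [h, sub_self, and_self]

theorem minor2_swap_rows (B : Matrix (Fin s) (Fin s) ℂ) (a b c d : Fin s) :
    minor2 B b a c d = -minor2 B a b c d := by
  simp only [minor2]; ring

theorem minor2_swap_cols (B : Matrix (Fin s) (Fin s) ℂ) (a b c d : Fin s) :
    minor2 B a b d c = -minor2 B a b c d := by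
  simp only [minor2]; ring

theorem minor2_same_row_mul_sub (B : Matrix (Fin s) (Fin s) ℂ) (i p q l : Fin s) :
    minor2 B i p i l * B p q - minor2 B i p i q * B p l = B p i * minor2 B i p q l := by
  simp only [minor2]; ring

theorem minor2_principal_mul (B : Matrix (Fin s) (Fin s) ℂ) (a b c : Fin s) :
    minor2 B a b a b * B a c = B a a * minor2 B b a b c + B a b * minor2 B a b a c := by
  simp only [minor2]; ring

variable (A : Matrix (Fin s) (Fin s) ℂ) (μ : ℂ)

theorem minor2_sub_smul_one {i j k l : Fin s} (hik : i ≠ k) (hil : i ≠ l) (hjk : j ≠ k)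
    (hjl : j ≠ l) : minor2 (A - μ • 1) i j k l = minor2 A i j k l := by
  simp only [minor2, sub_smul_one_apply_of_ne _ _ hik, sub_smul_one_apply_of_ne _ _ hil,
    sub_smul_one_apply_of_ne _ _ hjk, sub_smul_one_apply_of_ne _ _ hjl]

theorem minor2_sub_smul_one_same_row {i k l : Fin s} (hik : i ≠ k) (hil : i ≠ l) (hkl : k ≠ l) :
    minor2 (A - μ • 1) i k i l = minor2 A i k i l - μ * A k l := by
  simp only [minor2, sub_smul_one_apply_self, sub_smul_one_apply_of_ne _ _ hil,
    sub_smul_one_apply_of_ne _ _ hik.symm, sub_smul_one_apply_of_ne _ _ hkl]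
  ring

theorem minor2_sub_smul_one_principal {i k : Fin s} (hik : i ≠ k) :
    minor2 (A - μ • 1) i k i k = minor2 A i k i k - μ * (A i i + A k k) + μ ^ 2 := by
  simp only [minor2, sub_smul_one_apply_self, sub_smul_one_apply_of_ne _ _ hik,
    sub_smul_one_apply_of_ne _ _ hik.symm]
  ring

theorem minorRelations_sub_smul_one_iff : MinorRelations (A - μ • 1) ↔ MinorRelations A := by
  refine forall₄_congr fun i j k l => ?_
  refine imp_congr_right fun _ => imp_congr_right fun hik => imp_congr_right fun hil =>
    imp_congr_right fun hjk => imp_congr_right fun hjl => imp_congr_right fun hkl => ?_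
  rw [minor2_sub_smul_one A μ hik hil hjk hjl, minor2_sub_smul_one_same_row A μ hik hil hkl,
    minor2_sub_smul_one_same_row A μ hjk hjl hkl, minor2_sub_smul_one_principal A μ hik,
    minor2_sub_smul_one_principal A μ hil, minor2_sub_smul_one_principal A μ hjk,
    minor2_sub_smul_one_principal A μ hjl, sub_left_inj]
  refine and_congr_right' (and_congr_right' ?_)
  constructor <;> intro h <;> linear_combination h

end Minors

section RowMinors

variable {s : ℕ} {B : Matrix (Fin s) (Fin s) ℂ}

def RowMinorsVanish (B : Matrix (Fin s) (Fin s) ℂ) (k l : Fin s) : Prop :=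
  ∀ i, i ≠ k → i ≠ l → minor2 B i k i l = 0

theorem RowMinorsVanish.symm (hB : B.IsSymm) {k l : Fin s} (h : RowMinorsVanish B k l) :
    RowMinorsVanish B l k := by
  intro i hil hik
  have := h i hik hil
  simp only [minor2] at this ⊢
  linear_combination this + B i i * hB.apply k l - B i k * hB.apply i l + B i l * hB.apply i k

theorem rowMinorsVanish_of_minor2_eq_zero (hR : MinorRelations B) {k l w : Fin s} (hkl : k ≠ l)
    (hwk : w ≠ k) (hwl : w ≠ l) (h : minor2 B w k w l = 0) : RowMinorsVanish B k l := by
  intro i hik hil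
  rcases eq_or_ne i w with rfl | hiw
  · exact h
  · rw [(hR i w k l hiw hik hil hwk hwl hkl).2.1, h]

theorem RowMinorsVanish.of_ne_zero (hs : 4 ≤ s) (hR : MinorRelations B) {p q : Fin s}
    (h : RowMinorsVanish B p q) (hpq : p ≠ q) (hBpq : B p q ≠ 0) {l : Fin s} (hpl : p ≠ l) :
    RowMinorsVanish B p l := by
  rcases eq_or_ne l q with rfl | hlq
  · exact h
  obtain ⟨i, hip, hiq, hil⟩ := exists_ne_ne_ne (by simpa using hs) p q l
  refine rowMinorsVanish_of_minor2_eq_zero hR hpl hip hil ?_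
  have key := minor2_same_row_mul_sub B i p q l
  rw [h i hip hiq, (hR i p q l hip hiq hil hpq hpl hlq.symm).1, zero_mul, sub_zero,
    mul_zero] at key
  exact (mul_eq_zero.1 key).resolve_right hBpq

theorem RowMinorsVanish.forall_pairs (hs : 4 ≤ s) (hB : B.IsSymm) (hR : MinorRelations B)
    {p q : Fin s} (h : RowMinorsVanish B p q) (hpq : p ≠ q) (hBpq : B p q ≠ 0) :
    ∀ k l, k ≠ l → RowMinorsVanish B k l := by
  have hp : ∀ l, p ≠ l → RowMinorsVanish B p l := fun l => h.of_ne_zero hs hR hpq hBpq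
  intro k l hkl
  rcases eq_or_ne k p with rfl | hkp
  · exact hp l hkl
  rcases eq_or_ne l p with rfl | hlp
  · exact (hp k hkl.symm).symm hB
  by_cases hBpk : B p k ≠ 0
  · exact ((hp k hkp.symm).symm hB).of_ne_zero hs hR hkp (by rwa [hB.apply]) hkl
  by_cases hBpl : B p l ≠ 0
  · exact (((hp l hlp.symm).symm hB).of_ne_zero hs hR hlp (by rwa [hB.apply]) hkl.symm).symm hB
  push Not at hBpk hBpl
  have hqk : q ≠ k := by rintro rfl; exact hBpq hBpk
  have hql : q ≠ l := by rintro rfl; exact hBpq hBpl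
  have hBkl : B k l = 0 := by
    have := (hR p k q l hkp.symm hpq hlp.symm hqk.symm hkl hql).1
    rw [minor2, hBpl, zero_mul, sub_zero] at this
    exact (mul_eq_zero.1 this).resolve_left hBpq
  refine rowMinorsVanish_of_minor2_eq_zero hR hkl hkp.symm hlp.symm ?_
  simp [minor2, hBkl, hBpl]

end RowMinors

section PrincipalMinors

variable {s : ℕ} {B : Matrix (Fin s) (Fin s) ℂ}

theorem minor2_principal_eq_zero_of_ne_zero (hV : ∀ k l, k ≠ l → RowMinorsVanish B k l)
    {a b c : Fin s} (hab : a ≠ b) (hca : c ≠ a) (hcb : c ≠ b) (hBac : B a c ≠ 0) :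
    minor2 B a b a b = 0 := by
  have key := minor2_principal_mul B a b c
  rw [hV a c hca.symm b hab.symm hcb.symm, hV b c hcb.symm a hab hca.symm, mul_zero, mul_zero,
    add_zero] at key
  exact (mul_eq_zero.1 key).resolve_right hBac

theorem apply_self_eq_zero_of_forall_ne (hB : B.IsSymm)
    (hV : ∀ k l, k ≠ l → RowMinorsVanish B k l) {p q : Fin s} (hpq : p ≠ q) (hBpq : B p q ≠ 0)
    {a : Fin s} (ha : ∀ c, c ≠ a → B a c = 0) : B a a = 0 := by
  have hap : a ≠ p := by rintro rfl; exact hBpq (ha q hpq.symm)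
  have haq : a ≠ q := by rintro rfl; exact hBpq ((hB.apply a p).trans (ha p hpq))
  have := hV p q hpq a hap haq
  rw [minor2, ha q haq.symm, zero_mul, sub_zero] at this
  exact (mul_eq_zero.1 this).resolve_right hBpq

theorem minor2_principal_eq_zero_of_isolated (hs : 4 ≤ s) (hR : MinorRelations B)
    (hV : ∀ k l, k ≠ l → RowMinorsVanish B k l) {a b : Fin s} (hab : a ≠ b) (hBab : B a b ≠ 0)
    (hiso : ∀ c, c ≠ a → c ≠ b → B a c = 0 ∧ B b c = 0) : minor2 B a b a b = 0 := by
  obtain ⟨w, hwa, hwb, -⟩ := exists_ne_ne_ne (by simpa using hs) a b a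
  obtain ⟨x, hxa, hxb, hxw⟩ := exists_ne_ne_ne (by simpa using hs) a b w
  have hdiag : ∀ y, y ≠ a → y ≠ b → B y y = 0 := fun y hya hyb => by
    have := hV a b hab y hya hyb
    rw [minor2, (hiso y hya hyb).1, mul_zero, sub_zero] at this
    exact (mul_eq_zero.1 this).resolve_right hBab
  have hBwx : B w x = 0 := by
    have := (hR w a x b hwa hxw.symm hwb hxa.symm hab hxb).1
    rw [minor2, (hiso x hxa hxb).1, mul_zero, sub_zero] at this
    exact (mul_eq_zero.1 this).resolve_right hBab
  have := (hR a w b x hwa.symm hab hxa.symm hwb hxw.symm hxb.symm).2.2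
  simpa [minor2, hdiag w hwa hwb, hdiag x hxa hxb, hBwx, (hiso x hxa hxb).1,
    (hiso w hwa hwb).2] using this

theorem minor2_principal_eq_zero (hs : 4 ≤ s) (hB : B.IsSymm) (hR : MinorRelations B)
    (hV : ∀ k l, k ≠ l → RowMinorsVanish B k l) {p q : Fin s} (hpq : p ≠ q) (hBpq : B p q ≠ 0)
    {a b : Fin s} (hab : a ≠ b) : minor2 B a b a b = 0 := by
  by_cases hc : ∃ c, c ≠ a ∧ c ≠ b ∧ (B a c ≠ 0 ∨ B b c ≠ 0)
  · obtain ⟨c, hca, hcb, hac | hbc⟩ := hc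
    · exact minor2_principal_eq_zero_of_ne_zero hV hab hca hcb hac
    · rw [← neg_neg (minor2 B a b a b), ← minor2_swap_rows, ← minor2_swap_cols,
        minor2_principal_eq_zero_of_ne_zero hV hab.symm hcb hca hbc]
  push Not at hc
  rcases eq_or_ne (B a b) 0 with hBab | hBab
  · have ha : ∀ c, c ≠ a → B a c = 0 := fun c hca => by
      rcases eq_or_ne c b with rfl | hcb
      · exact hBab
      · exact (hc c hca hcb).1
    simp [minor2, apply_self_eq_zero_of_forall_ne hB hV hpq hBpq ha, hBab]
  · exact minor2_principal_eq_zero_of_isolated hs hR hV hab hBab hc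

theorem forall_minor2_eq_zero (hR : MinorRelations B)
    (hV : ∀ k l, k ≠ l → RowMinorsVanish B k l) (hD : ∀ a b, a ≠ b → minor2 B a b a b = 0) :
    ∀ a b c d, minor2 B a b c d = 0 := by
  intro a b c d
  rcases eq_or_ne a b with rfl | hab
  · simp only [minor2]; ring
  rcases eq_or_ne c d with rfl | hcd
  · simp only [minor2]; ring
  rcases eq_or_ne c a with rfl | hca
  · rcases eq_or_ne d b with rfl | hdb
    · exact hD c d hab
    · exact hV b d hdb.symm c hab hcd
  rcases eq_or_ne c b with rfl | hcb
  · rcases eq_or_ne d a with rfl | hda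
    · rw [minor2_swap_cols, hD d c hab, neg_zero]
    · rw [← neg_eq_zero, ← minor2_swap_rows, hV a d hda.symm c hca hcd]
  rcases eq_or_ne d a with rfl | hda
  · rw [minor2_swap_cols, hV b c hcb.symm d hab hca.symm, neg_zero]
  rcases eq_or_ne d b with rfl | hdb
  · rw [minor2_swap_rows, minor2_swap_cols, neg_neg, hV a c hca.symm d hab.symm hcd.symm]
  exact (hR a b c d hab hca.symm hda.symm hcb.symm hdb.symm hcd).1

end PrincipalMinors

section RankOne

variable {s : ℕ} {A : Matrix (Fin s) (Fin s) ℂ}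

theorem exists_rank_sub_smul_one_le_one_of_isDiag (hs : 4 ≤ s) (hA : A.IsDiag)
    (hR : MinorRelations A) : ∃ μ : ℂ, (A - μ • 1).rank ≤ 1 := by
  obtain ⟨o, μ, hμ⟩ := exists_forall_ne_eq_of_sub_mul_sub_eq_zero (by simpa using hs) A.diag
    fun i j k l hij hik hil hjk hjl hkl => by
      have := (hR i j k l hij hik hil hjk hjl hkl).2.2
      simp only [minor2, hA hik, hA hil, hA hjk, hA hjl, hA hik.symm, hA hil.symm, hA hjk.symm,
        hA hjl.symm, mul_zero, sub_zero] at this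
      simp only [diag_apply]
      linear_combination this
  refine ⟨μ, ?_⟩
  rw [← (hA.sub (isDiag_one.smul μ)).diagonal_diag, rank_diagonal, Fintype.card_le_one_iff]
  have h_eq_o : ∀ x : {i // (A - μ • 1).diag i ≠ 0}, (x : Fin s) = o := fun x =>
    by_contra fun hxo => x.2 (by simp [← hμ x hxo])
  exact fun x y => Subtype.ext ((h_eq_o x).trans (h_eq_o y).symm)

theorem exists_rank_sub_smul_one_le_one_of_ne_zero (hs : 4 ≤ s) (hA : A.IsSymm)
    (hR : MinorRelations A) {p q : Fin s} (hpq : p ≠ q) (hApq : A p q ≠ 0) :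
    ∃ μ : ℂ, (A - μ • 1).rank ≤ 1 := by
  obtain ⟨w, hwp, hwq, -⟩ := exists_ne_ne_ne (by simpa using hs) p q p
  set μ := minor2 A w p w q / A p q
  refine ⟨μ, (rank_le_one_iff_forall_minor2_eq_zero _).2 ?_⟩
  have hB : (A - μ • 1).IsSymm := hA.sub (isSymm_one.smul μ)
  have hRB := (minorRelations_sub_smul_one_iff A μ).2 hR
  have hBpq : (A - μ • 1) p q ≠ 0 := by rwa [sub_smul_one_apply_of_ne _ _ hpq]
  have hw : minor2 (A - μ • 1) w p w q = 0 := by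
    rw [minor2_sub_smul_one_same_row A μ hwp hwq hpq, div_mul_cancel₀ _ hApq, sub_self]
  have hV :=
    (rowMinorsVanish_of_minor2_eq_zero hRB hpq hwp hwq hw).forall_pairs hs hB hRB hpq hBpq
  exact forall_minor2_eq_zero hRB hV fun a b hab =>
    minor2_principal_eq_zero hs hB hRB hV hpq hBpq hab

end RankOne

/-- A complex symmetric `s × s` matrix (`s ≥ 4`) has an eigenspace of codimension at
most `1` (i.e. `A − μ•1` has rank at most `1` for some `μ`) if and only if its `2×2`
minors satisfy the stated relations for all pairwise distinct indices. -/
theorem symmetric_rank_one_perturbation_iff_minors (s : ℕ) (hs : 4 ≤ s)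
    (A : Matrix (Fin s) (Fin s) ℂ) (hA : Aᵀ = A) :
    (∃ μ : ℂ, (A - μ • (1 : Matrix (Fin s) (Fin s) ℂ)).rank ≤ 1)
      ↔ ∀ i j k l : Fin s, i ≠ j → i ≠ k → i ≠ l → j ≠ k → j ≠ l → k ≠ l →
          minor2 A i j k l = 0 ∧
          minor2 A i k i l = minor2 A j k j l ∧
          minor2 A i k i k - minor2 A i l i l = minor2 A j k j k - minor2 A j l j l := by
  change _ ↔ MinorRelations A
  constructor
  · rintro ⟨μ, hμ⟩
    exact (minorRelations_sub_smul_one_iff A μ).1 <| minorRelations_of_forall_minor2_eq_zero <|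
      (rank_le_one_iff_forall_minor2_eq_zero _).1 hμ
  · intro hR
    by_cases hdiag : A.IsDiag
    · exact exists_rank_sub_smul_one_le_one_of_isDiag hs hdiag hR
    · obtain ⟨p, q, hpq, hApq⟩ : ∃ p q, p ≠ q ∧ A p q ≠ 0 := by
        simpa [IsDiag, Pairwise] using hdiag
      exact exists_rank_sub_smul_one_le_one_of_ne_zero hs hA hR hpq hApq
end

section
/- Let s ≥ 4 and let A be a symmetric s × s real matrix (Aᵀ = A). Then there exists λ ∈ ℝ such that the eigenspace {x : Fin s → ℝ | A.mulVec x = λ • x} has dimension at least s − 1 (i.e., A has an eigenvalue of multiplicity at least s − 1), if and only if for all pairwise distinct indices i, j, k, ℓ ∈ Fin s the 2×2 minors of A satisfy: A_{ij|kℓ} = 0, A_{ik|iℓ} = A_{jk|jℓ}, and A_{ik|ik} − A_{iℓ|iℓ} = A_{jk|jk} − A_{jℓ|jℓ}. -/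
open Matrix

/-- The 2×2 minor of a real square matrix `A` with rows `a, b` and columns `c, d`. -/
def minor2R {s : ℕ} (A : Matrix (Fin s) (Fin s) ℝ) (a b c d : Fin s) : ℝ :=
  A a c * A b d - A a d * A b c

section aux

/-- With at least four indices, one avoiding any three given indices exists. -/
lemma fresh_idx (s : ℕ) (hs : 4 ≤ s) (a b c : Fin s) :
    ∃ x : Fin s, x ≠ a ∧ x ≠ b ∧ x ≠ c := by
  by_contra h
  push_neg at h
  have hsub : (Finset.univ : Finset (Fin s)) ⊆ {a, b, c} := by
    intro x _
    simp only [Finset.mem_insert, Finset.mem_singleton]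
    by_contra hx
    push_neg at hx
    exact hx.2.2 (h x hx.1 hx.2.1)
  have h1 := Finset.card_le_card hsub
  have h2 : ({a, b, c} : Finset (Fin s)).card ≤ 3 := by
    apply le_trans (Finset.card_insert_le _ _)
    have := Finset.card_insert_le b ({c} : Finset (Fin s))
    simp at this ⊢
    omega
  simp [Finset.card_univ] at h1
  omega

/-- The coercion of the kernel of `(A - lam • 1).mulVecLin` is the eigenspace set. -/
lemma eigen_coe (s : ℕ) (A : Matrix (Fin s) (Fin s) ℝ) (lam : ℝ) :
    ((LinearMap.ker (A - lam • 1).mulVecLin : Submodule ℝ (Fin s → ℝ)) : Set (Fin s → ℝ))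
      = {x | A.mulVec x = lam • x} := by
  ext x
  simp [LinearMap.mem_ker, sub_mulVec, smul_mulVec, one_mulVec, sub_eq_zero]

/-- If the kernel of a matrix contains the kernel of a scalar-valued linear map, it
has dimension at least `s - 1`. -/
lemma ker_ge_of_le (s : ℕ) (B : Matrix (Fin s) (Fin s) ℝ)
    (f : (Fin s → ℝ) →ₗ[ℝ] ℝ) (hle : LinearMap.ker f ≤ LinearMap.ker B.mulVecLin) :
    s - 1 ≤ Module.finrank ℝ (LinearMap.ker B.mulVecLin) := by
  have hker : s - 1 ≤ Module.finrank ℝ (LinearMap.ker f) := by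
    have h1 := LinearMap.finrank_range_add_finrank_ker f
    have h2 : Module.finrank ℝ (LinearMap.range f) ≤ 1 := by
      have := Submodule.finrank_le (LinearMap.range f)
      simpa using this
    have h3 : Module.finrank ℝ (Fin s → ℝ) = s := by simp
    omega
  exact le_trans hker (Submodule.finrank_mono hle)

/-- A matrix whose rows are all proportional to one row has a kernel of
dimension at least `s - 1`. -/
lemma ker_big (s : ℕ) (B : Matrix (Fin s) (Fin s) ℝ) (p q : Fin s) (hpq : B p q ≠ 0)
    (hprop : ∀ r c, B r c * B p q = B r q * B p c) :
    s - 1 ≤ Module.finrank ℝ (LinearMap.ker B.mulVecLin) := by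
  apply ker_ge_of_le s B ((LinearMap.proj p) ∘ₗ B.mulVecLin)
  intro x hx
  simp only [LinearMap.mem_ker, LinearMap.comp_apply, LinearMap.proj_apply] at hx ⊢
  ext r
  have hkey : B.mulVec x r * B p q = B r q * (B.mulVecLin x p) := by
    simp only [mulVecLin_apply, mulVec, dotProduct, Finset.sum_mul, Finset.mul_sum]
    apply Finset.sum_congr rfl
    intro c _
    rw [show B r c * x c * B p q = (B r c * B p q) * x c by ring, hprop r c]
    ring
  rw [hx, mul_zero] at hkey
  simp only [mulVecLin_apply, Pi.zero_apply]
  rcases mul_eq_zero.mp hkey with h | h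
  · exact h
  · exact absurd h hpq

/-- A matrix vanishing outside the `(e, e)` entry has a kernel of dimension at
least `s - 1`. -/
lemma ker_diag (s : ℕ) (B : Matrix (Fin s) (Fin s) ℝ) (e : Fin s)
    (hB : ∀ m n : Fin s, m ≠ e ∨ n ≠ e → B m n = 0) :
    s - 1 ≤ Module.finrank ℝ (LinearMap.ker B.mulVecLin) := by
  apply ker_ge_of_le s B (LinearMap.proj e)
  intro x hx
  simp only [LinearMap.mem_ker, LinearMap.proj_apply] at hx
  simp only [LinearMap.mem_ker]
  ext r
  simp only [mulVecLin_apply, mulVec, dotProduct, Pi.zero_apply]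
  apply Finset.sum_eq_zero
  intro c _
  by_cases hc : c = e
  · subst hc; rw [hx, mul_zero]
  · rw [hB r c (Or.inr hc), zero_mul]

/-- If a matrix kills a subspace of dimension at least `s - 1`, all its `2×2`
minors with distinct column indices vanish. -/
lemma Bminor_zero (s : ℕ) (hs : 4 ≤ s) (B : Matrix (Fin s) (Fin s) ℝ)
    (V : Submodule ℝ (Fin s → ℝ)) (hV : ∀ x ∈ V, B.mulVec x = 0)
    (hrk : s - 1 ≤ Module.finrank ℝ V) (a b c d : Fin s) (hcd : c ≠ d) :
    B a c * B b d - B a d * B b c = 0 := by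
  set u : Fin s → ℝ := Pi.single c 1 with hu
  set v : Fin s → ℝ := Pi.single d 1 with hv
  set W : Submodule ℝ (Fin s → ℝ) := Submodule.span ℝ {u, v} with hW
  have hWrk : Module.finrank ℝ W = 2 := by
    have hli : LinearIndependent ℝ ![u, v] := by
      rw [LinearIndependent.pair_iff]
      intro α β hab
      have h1 := congrFun hab c
      have h2 := congrFun hab d
      simp [hu, hv, Pi.single_apply, hcd, hcd.symm] at h1 h2
      exact ⟨h1, h2⟩
    have hr : Set.range ![u, v] = {u, v} := by
      simp [Matrix.range_cons, Matrix.range_empty, Set.pair_comm]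
    have := finrank_span_eq_card hli
    rw [hr] at this
    simpa using this
  have hsum := Submodule.finrank_sup_add_finrank_inf_eq V W
  have hsup : Module.finrank ℝ ↥(V ⊔ W) ≤ s := by
    have := Submodule.finrank_le (V ⊔ W)
    simpa using this
  have hinf : 0 < Module.finrank ℝ ↥(V ⊓ W) := by omega
  have : Nontrivial ↥(V ⊓ W) := Module.nontrivial_of_finrank_pos hinf
  obtain ⟨x, hx0⟩ := exists_ne (0 : ↥(V ⊓ W))
  obtain ⟨α, β, hx⟩ := Submodule.mem_span_pair.mp (x.2.2 : (x : Fin s → ℝ) ∈ W)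
  have hxV : B.mulVec (x : Fin s → ℝ) = 0 := hV _ x.2.1
  have hmul : ∀ r : Fin s, α * B r c + β * B r d = 0 := by
    intro r
    have h0 := congrFun hxV r
    have hxe : ∀ e : Fin s, (x : Fin s → ℝ) e = α * u e + β * v e := by
      intro e; rw [← hx]; simp
    simp only [mulVec, dotProduct, Pi.zero_apply] at h0
    calc α * B r c + β * B r d = ∑ e : Fin s, B r e * (x : Fin s → ℝ) e := by
          rw [show (fun e => B r e * (x : Fin s → ℝ) e)
              = fun e => α * (B r e * u e) + β * (B r e * v e) by
            funext e; rw [hxe e]; ring]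
          rw [Finset.sum_add_distrib, ← Finset.mul_sum, ← Finset.mul_sum]
          simp [hu, hv, Pi.single_apply, mul_ite]
      _ = 0 := h0
  have hne : α ≠ 0 ∨ β ≠ 0 := by
    by_contra h
    push_neg at h
    apply hx0
    apply Subtype.ext
    have : (x : Fin s → ℝ) = 0 := by
      rw [← hx, h.1, h.2]; simp
    simpa using this
  have ha := hmul a
  have hb := hmul b
  rcases hne with h | h
  · have := mul_left_cancel₀ h (show α * (B a c * B b d - B a d * B b c) = α * 0 by
      linear_combination B b d * ha - B a d * hb)
    simpa using this
  · have := mul_left_cancel₀ h (show β * (B a c * B b d - B a d * B b c) = β * 0 by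
      linear_combination B a c * hb - B b c * ha)
    simpa using this

end aux

/-- A real symmetric `s × s` matrix (`s ≥ 4`) has an eigenvalue of multiplicity at
least `s − 1` (an eigenspace of dimension at least `s − 1`) if and only if its `2×2`
minors satisfy the stated relations for all pairwise distinct indices. -/
theorem real_symmetric_degenerate_spectrum_iff_minors (s : ℕ) (hs : 4 ≤ s)
    (A : Matrix (Fin s) (Fin s) ℝ) (hA : Aᵀ = A) :
    (∃ lam : ℝ, ∃ V : Submodule ℝ (Fin s → ℝ),
        (V : Set (Fin s → ℝ)) = {x | A.mulVec x = lam • x} ∧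
        s - 1 ≤ Module.finrank ℝ V)
      ↔ ∀ i j k l : Fin s, i ≠ j → i ≠ k → i ≠ l → j ≠ k → j ≠ l → k ≠ l →
          minor2R A i j k l = 0 ∧
          minor2R A i k i l = minor2R A j k j l ∧
          minor2R A i k i k - minor2R A i l i l
            = minor2R A j k j k - minor2R A j l j l := by
  have hS : ∀ x y : Fin s, A y x = A x y := fun x y => congrFun (congrFun hA x) y
  constructor
  · -- Forward direction
    rintro ⟨lam, V, hVcoe, hrk⟩
    set B : Matrix (Fin s) (Fin s) ℝ := A - lam • 1 with hBdef
    have hV : ∀ x ∈ V, B.mulVec x = 0 := by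
      intro x hxV
      have hx : A.mulVec x = lam • x := by
        have : x ∈ (V : Set (Fin s → ℝ)) := hxV
        rw [hVcoe] at this
        exact this
      rw [hBdef, sub_mulVec, smul_mulVec, one_mulVec, hx, sub_self]
    have hBm : ∀ a b c d : Fin s, c ≠ d → B a c * B b d - B a d * B b c = 0 :=
      Bminor_zero s hs B V hV hrk
    have hB1 : ∀ x y : Fin s, x ≠ y → B x y = A x y := by
      intro x y h
      simp [hBdef, Matrix.sub_apply, Matrix.smul_apply, Matrix.one_apply_ne h]
    have hB2 : ∀ x : Fin s, B x x = A x x - lam := by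
      intro x
      simp [hBdef, Matrix.sub_apply, Matrix.smul_apply, Matrix.one_apply_eq]
    intro i j k l hij hik hil hjk hjl hkl
    have h1 := hBm i j k l hkl
    rw [hB1 i k hik, hB1 j l hjl, hB1 i l hil, hB1 j k hjk] at h1
    have h2 := hBm i k i l hil
    rw [hB2 i, hB1 k l hkl, hB1 i l hil, hB1 k i hik.symm] at h2
    have h3 := hBm j k j l hjl
    rw [hB2 j, hB1 k l hkl, hB1 j l hjl, hB1 k j hjk.symm] at h3
    have h4 := hBm i k i k hik
    rw [hB2 i, hB2 k, hB1 i k hik, hB1 k i hik.symm] at h4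
    have h5 := hBm i l i l hil
    rw [hB2 i, hB2 l, hB1 i l hil, hB1 l i hil.symm] at h5
    have h6 := hBm j k j k hjk
    rw [hB2 j, hB2 k, hB1 j k hjk, hB1 k j hjk.symm] at h6
    have h7 := hBm j l j l hjl
    rw [hB2 j, hB2 l, hB1 j l hjl, hB1 l j hjl.symm] at h7
    refine ⟨by simpa [minor2R] using h1, ?_, ?_⟩
    · simp only [minor2R]
      linear_combination h2 - h3
    · simp only [minor2R]
      linear_combination h4 - h5 - h6 + h7
  · -- Backward direction
    intro H
    by_cases hdiag : ∀ p q : Fin s, p ≠ q → A p q = 0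
    · -- A is a diagonal matrix
      have main : ∃ c : ℝ, ∃ e : Fin s, ∀ m : Fin s, m ≠ e → A m m = c := by
        by_cases hall : ∀ m n : Fin s, A m m = A n n
        · have h0 : 0 < s := by omega
          exact ⟨A ⟨0, h0⟩ ⟨0, h0⟩, ⟨0, h0⟩, fun m _ => hall m ⟨0, h0⟩⟩
        · push_neg at hall
          obtain ⟨i, j, hijne⟩ := hall
          have hij : i ≠ j := by rintro rfl; exact hijne rfl
          have hkl : ∀ k l : Fin s, k ≠ l → k ≠ i → k ≠ j → l ≠ i → l ≠ j →
              A k k = A l l := by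
            intro k l hkl hki hkj hli hlj
            have hc := (H i j k l hij (Ne.symm hki) (Ne.symm hli)
              (Ne.symm hkj) (Ne.symm hlj) hkl).2.2
            simp only [minor2R] at hc
            rw [hdiag i k (Ne.symm hki), hdiag i l (Ne.symm hli),
              hdiag j k (Ne.symm hkj), hdiag j l (Ne.symm hlj),
              hdiag k i hki, hdiag l i hli, hdiag k j hkj, hdiag l j hlj] at hc
            have hz : (A i i - A j j) * (A k k - A l l) = 0 := by linear_combination hc
            rcases mul_eq_zero.mp hz with h | h
            · exact absurd (sub_eq_zero.mp h) hijne
            · exact sub_eq_zero.mp h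
          obtain ⟨k, hki, hkj, -⟩ := fresh_idx s hs i j j
          obtain ⟨l, hli, hlj, hlk⟩ := fresh_idx s hs i j k
          have hll : A l l = A k k := hkl l k hlk hli hlj hki hkj
          have hkey : (A i i - A k k) * (A j j - A k k) = 0 := by
            have hc := (H i k j l (Ne.symm hki) hij (Ne.symm hli)
              hkj (Ne.symm hlk) (Ne.symm hlj)).2.2
            simp only [minor2R] at hc
            rw [hdiag i j hij, hdiag i l (Ne.symm hli), hdiag j i (Ne.symm hij),
              hdiag l i hli, hdiag k j hkj, hdiag j k (Ne.symm hkj),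
              hdiag k l (Ne.symm hlk), hdiag l k hlk] at hc
            have hz : (A i i - A k k) * (A j j - A l l) = 0 := by linear_combination hc
            rw [hll] at hz
            exact hz
          rcases mul_eq_zero.mp hkey with h | h
          · -- A i i = A k k, exceptional index j
            refine ⟨A k k, j, fun m hmj => ?_⟩
            by_cases hmi : m = i
            · subst hmi; exact sub_eq_zero.mp h
            · by_cases hmk : m = k
              · subst hmk; rfl
              · exact hkl m k hmk hmi hmj hki hkj
          · -- A j j = A k k, exceptional index i
            refine ⟨A k k, i, fun m hmi => ?_⟩
            by_cases hmj : m = j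
            · subst hmj; exact sub_eq_zero.mp h
            · by_cases hmk : m = k
              · subst hmk; rfl
              · exact hkl m k hmk hmi hmj hki hkj
      obtain ⟨c, e, hce⟩ := main
      refine ⟨c, LinearMap.ker (A - c • 1).mulVecLin, eigen_coe s A c, ?_⟩
      apply ker_diag s _ e
      intro m n hmn
      by_cases h : m = n
      · subst h
        have hme : m ≠ e := by tauto
        simp [Matrix.sub_apply, Matrix.smul_apply, Matrix.one_apply_eq, hce m hme]
      · simp [Matrix.sub_apply, Matrix.smul_apply, Matrix.one_apply_ne h, hdiag m n h]
    · -- A has a nonzero off-diagonal entry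
      push_neg at hdiag
      obtain ⟨p, q, hpqne, hpq⟩ := hdiag
      obtain ⟨r, hrp, hrq, -⟩ := fresh_idx s hs p q q
      set lam : ℝ := A r r - A r p * A r q / A p q with hlamdef
      have hlam : lam * A p q = A r r * A p q - A r p * A r q := by
        rw [hlamdef]
        field_simp
      -- F1 : the diagonal relation for indices off p, q
      have F1 : ∀ a : Fin s, a ≠ p → a ≠ q → (A a a - lam) * A p q = A a p * A a q := by
        intro a hap haq
        by_cases har : a = r
        · subst har
          linear_combination -hlam
        · have hc := (H a r p q har hap haq hrp hrq hpqne).2.1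
          simp only [minor2R] at hc
          linear_combination hc + A a q * hS a p - hlam - A r q * hS r p
      -- F2a : row-q relation
      have F2a : ∀ b : Fin s, b ≠ p → b ≠ q → (A q q - lam) * A p b = A q b * A p q := by
        intro b hbp hbq
        obtain ⟨j, hjp, hjq, hjb⟩ := fresh_idx s hs p q b
        have hF1j := F1 j hjp hjq
        have hc1 := (H j p b q hjp hjb hjq (Ne.symm hbp) hpqne hbq).1
        simp only [minor2R] at hc1
        have key0 : ((A j j - lam) * A p b - A j b * A j p) * A p q = 0 := by
          linear_combination A p b * hF1j - A j p * hc1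
        have key : (A j j - lam) * A p b = A j b * A j p := by
          rcases mul_eq_zero.mp key0 with h | h
          · exact sub_eq_zero.mp h
          · exact absurd h hpq
        have hc := (H q j p b (Ne.symm hjq) (Ne.symm hpqne) (Ne.symm hbq)
          hjp hjb (Ne.symm hbp)).2.1
        simp only [minor2R] at hc
        linear_combination hc + key - A j b * hS j p
      -- F2b : column-q relation
      have F2b : ∀ a : Fin s, a ≠ p → a ≠ q → (A p p - lam) * A a q = A a p * A p q := by
        intro a hap haq
        obtain ⟨j, hjp, hjq, hja⟩ := fresh_idx s hs p q a
        have hF1j := F1 j hjp hjq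
        have hc1 := (H j q a p hjq hja hjp (Ne.symm haq) (Ne.symm hpqne)
          hap).1
        simp only [minor2R] at hc1
        have key0 : ((A j j - lam) * A a q - A j a * A j q) * A p q = 0 := by
          linear_combination A a q * hF1j - A j q * hc1 + A j a * A j q * hS p q
            - A j p * A j q * hS a q
        have key : (A j j - lam) * A a q = A j a * A j q := by
          rcases mul_eq_zero.mp key0 with h | h
          · exact sub_eq_zero.mp h
          · exact absurd h hpq
        have hc := (H p j q a (Ne.symm hjp) hpqne (Ne.symm hap) hjq hja
          (Ne.symm haq)).2.1
        simp only [minor2R] at hc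
        linear_combination hc + key - (A p p - A j j) * hS a q + A q p * hS a p
          + A a p * hS p q - A j a * hS j q
      -- F3 : the quadratic relation for the pair (p, q)
      have F3 : (A p p - lam) * (A q q - lam) = A p q * A q p := by
        obtain ⟨j, hjp, hjq, -⟩ := fresh_idx s hs p q q
        obtain ⟨l, hlp, hlq, hlj⟩ := fresh_idx s hs p q j
        have hF1j := F1 j hjp hjq
        have hF1l := F1 l hlp hlq
        have hF2aj := F2a j hjp hjq
        have hF2bl := F2b l hlp hlq
        have c1a := (H j l p q (Ne.symm hlj) hjp hjq hlp hlq hpqne).1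
        simp only [minor2R] at c1a
        have c1b := (H j p l q hjp (Ne.symm hlj) hjq (Ne.symm hlp) hpqne hlq).1
        simp only [minor2R] at c1b
        have hc3 := (H p j q l (Ne.symm hjp) hpqne (Ne.symm hlp) hjq
          (Ne.symm hlj) (Ne.symm hlq)).2.2
        simp only [minor2R] at hc3
        have s1 : (A p p - lam) * (A l l - lam) * (A p q * A p q)
            = (A l p * A l p) * (A p q * A p q) := by
          linear_combination ((A p p - lam) * A p q) * hF1l + (A l p * A p q) * hF2bl
        have s2 : (A j j - lam) * (A q q - lam) * (A p q * A p q)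
            = (A q j * A j q) * (A p q * A p q) := by
          linear_combination ((A q q - lam) * A p q) * hF1j + (A j q * A p q) * hF2aj
            - ((A q q - lam) * A p q * A j q) * hS j p
        have s3 : (A j j - lam) * (A l l - lam) * (A p q * A p q)
            = (A j q * A l p) * (A j q * A l p) := by
          linear_combination ((A l l - lam) * A p q) * hF1j + (A j p * A j q) * hF1l
            + (A j q * A l p) * c1a
        have s4 : (A j l * A l j) * (A p q * A p q)
            = (A j q * A p l) * (A j q * A p l) := by
          linear_combination (A l j * A p q + A j q * A p l) * c1b
            + (A j q * A p l * A p q) * hS j l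
        have F3key : ((A p p - lam) * (A q q - lam) - A p q * A q p)
            * (A p q * A p q) = 0 := by
          linear_combination (A p q * A p q) * hc3 + s1 + s2 - s3 + s4
            + (A l p * A p q * A p q - A j q * A j q * (A p l + A l p)) * hS p l
        rcases mul_eq_zero.mp F3key with h | h
        · exact sub_eq_zero.mp h
        · exact absurd (mul_self_eq_zero.mp h) hpq
      -- Assemble the matrix B = A - lam • 1 and prove row proportionality
      set B : Matrix (Fin s) (Fin s) ℝ := A - lam • 1 with hBdef
      have hB1 : ∀ x y : Fin s, x ≠ y → B x y = A x y := by
        intro x y h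
        simp [hBdef, Matrix.sub_apply, Matrix.smul_apply, Matrix.one_apply_ne h]
      have hB2 : ∀ x : Fin s, B x x = A x x - lam := by
        intro x
        simp [hBdef, Matrix.sub_apply, Matrix.smul_apply, Matrix.one_apply_eq]
      have hBpq : B p q = A p q := hB1 p q hpqne
      have hprop : ∀ r' c : Fin s, B r' c * B p q = B r' q * B p c := by
        intro r' c
        by_cases hrp' : r' = p
        · rw [hrp']; ring
        · by_cases hcq : c = q
          · rw [hcq]
          · by_cases hrq' : r' = q
            · rw [hrq']
              by_cases hcp : c = p
              · rw [hcp]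
                rw [hB1 q p (Ne.symm hpqne), hBpq, hB2 q, hB2 p]
                linear_combination -F3
              · rw [hB1 q c (Ne.symm hcq), hBpq, hB2 q, hB1 p c (Ne.symm hcp)]
                linear_combination -(F2a c hcp hcq)
            · by_cases hcp : c = p
              · rw [hcp]
                rw [hB1 r' p hrp', hBpq, hB1 r' q hrq', hB2 p]
                linear_combination -(F2b r' hrp' hrq')
              · by_cases hcr : c = r'
                · rw [hcr]
                  rw [hB2 r', hBpq, hB1 r' q hrq', hB1 p r' (Ne.symm hrp')]
                  linear_combination F1 r' hrp' hrq' - A r' q * hS r' p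
                · have hc1 := (H r' p c q hrp' (Ne.symm hcr) hrq'
                    (Ne.symm hcp) hpqne hcq).1
                  simp only [minor2R] at hc1
                  rw [hB1 r' c (Ne.symm hcr), hBpq, hB1 r' q hrq',
                    hB1 p c (Ne.symm hcp)]
                  linear_combination hc1
      refine ⟨lam, LinearMap.ker B.mulVecLin, ?_, ?_⟩
      · rw [hBdef]; exact eigen_coe s A lam
      · exact ker_big s B p q (by rwa [hBpq]) hprop
end

section
/- Let u, v : Fin m → ℂ be linearly independent over ℂ, and suppose there exist pairs (p₁, p₂) and (q₁, q₂) in ℂ × ℂ such that for every index i, the pair (u i, v i) is a scalar multiple of (p₁, p₂) or a scalar multiple of (q₁, q₂). Then there exists a ℂ-subspace W of Fin m → ℂ of dimension 2 such that (fun x i => (x i)^2) '' {a • u + b • v | a b : ℂ} = W (equality of subsets of Fin m → ℂ). (If the point configuration of a line in ℙ^n consists of exactly two points, the coordinate-wise square of the line is again a line.) -/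
/-!
Every coordinate pair `(u i, v i)` lies on the line `ℂ p` or on the line `ℂ q`, so
`u = p.1 • α + q.1 • β` and `v = p.2 • α + q.2 • β` for two vectors `α`, `β` with disjoint
supports. Since `u`, `v` are independent, `α`, `β` span the same plane as `u`, `v`. On vectors
with disjoint supports squaring is additive, `(s • α + t • β) ^ 2 = s ^ 2 • α ^ 2 + t ^ 2 • β ^ 2`,
and every complex number is a square, so the squared plane is the plane spanned by `α ^ 2`
and `β ^ 2`, which again have disjoint supports.
-/

open Module Submodule

section Pair

variable {K V : Type*} [DivisionRing K] [AddCommGroup V] [Module K V]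

theorem finrank_span_pair_le_two (x y : V) : finrank K (span K {x, y}) ≤ 2 := by
  have h := finrank_range_le_card (R := K) ![x, y]
  rwa [Matrix.range_cons_cons_empty, Fintype.card_fin] at h

theorem finrank_span_pair_eq_two_iff {x y : V} :
    finrank K (span K {x, y}) = 2 ↔ LinearIndependent K ![x, y] := by
  rw [linearIndependent_iff_card_eq_finrank_span, Matrix.range_cons_cons_empty,
    Set.finrank, Fintype.card_fin, eq_comm]

end Pair

theorem setOf_exists_smul_add_smul_eq_span_pair {R M : Type*} [Semiring R] [AddCommMonoid M]
    [Module R M] (u v : M) :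
    {x : M | ∃ a b : R, x = a • u + b • v} = span R {u, v} := by
  ext x
  simp only [Set.mem_ofPred_eq, SetLike.mem_coe, mem_span_pair, eq_comm]

section DisjointSupport

variable {ι : Type*}

theorem exists_mul_eq_zero_of_forall_mem_lines {R : Type*} [CommSemiring R] {u v : ι → R}
    {p q : R × R} (h : ∀ i, (∃ c : R, (u i, v i) = c • p) ∨ ∃ c : R, (u i, v i) = c • q) :
    ∃ α β : ι → R, α * β = 0 ∧ u = p.1 • α + q.1 • β ∧ v = p.2 • α + q.2 • β := by
  have hi : ∀ i, ∃ a b : R, a * b = 0 ∧ (u i, v i) = a • p + b • q := by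
    intro i
    rcases h i with ⟨c, hc⟩ | ⟨c, hc⟩
    · exact ⟨c, 0, mul_zero c, by simp [hc]⟩
    · exact ⟨0, c, zero_mul c, by simp [hc]⟩
  choose α β hαβ huv using hi
  refine ⟨α, β, funext hαβ, funext fun i => ?_, funext fun i => ?_⟩
  · simpa [mul_comm] using congrArg Prod.fst (huv i)
  · simpa [mul_comm] using congrArg Prod.snd (huv i)

theorem linearIndependent_pair_of_mul_eq_zero {K : Type*} [Field K] {x y : ι → K}
    (hxy : x * y = 0) (hx : x ≠ 0) (hy : y ≠ 0) : LinearIndependent K ![x, y] := by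
  obtain ⟨i, hi⟩ := Function.ne_iff.mp hx
  obtain ⟨j, hj⟩ := Function.ne_iff.mp hy
  have hyi : y i = 0 := (mul_eq_zero.mp (congrFun hxy i)).resolve_left hi
  have hxj : x j = 0 := (mul_eq_zero.mp (congrFun hxy j)).resolve_right hj
  rw [LinearIndependent.pair_iff]
  intro s t hst
  have hsi := congrFun hst i
  have htj := congrFun hst j
  simp only [Pi.add_apply, Pi.smul_apply, smul_eq_mul, Pi.zero_apply, hyi, hxj,
    mul_zero, add_zero, zero_add] at hsi htj
  exact ⟨(mul_eq_zero.mp hsi).resolve_right hi, (mul_eq_zero.mp htj).resolve_right hj⟩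

theorem image_sq_span_pair_of_mul_eq_zero {R : Type*} [CommRing R] (hR : ∀ z : R, IsSquare z)
    {α β : ι → R} (hαβ : α * β = 0) :
    (fun x => x ^ 2) '' (span R {α, β} : Set (ι → R)) = span R {α ^ 2, β ^ 2} := by
  have hsq : ∀ s t : R, (s • α + t • β) ^ 2 = s ^ 2 • α ^ 2 + t ^ 2 • β ^ 2 := by
    intro s t
    funext i
    have hi := congrFun hαβ i
    simp only [Pi.mul_apply, Pi.zero_apply] at hi
    simp only [Pi.pow_apply, Pi.add_apply, Pi.smul_apply, smul_eq_mul]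
    linear_combination (2 * s * t) * hi
  ext x
  simp only [Set.mem_image, SetLike.mem_coe, mem_span_pair]
  constructor
  · rintro ⟨_, ⟨s, t, rfl⟩, rfl⟩
    exact ⟨s ^ 2, t ^ 2, (hsq s t).symm⟩
  · rintro ⟨s, t, rfl⟩
    obtain ⟨σ, rfl⟩ := hR s
    obtain ⟨τ, rfl⟩ := hR t
    exact ⟨σ • α + τ • β, ⟨σ, τ, rfl⟩, by rw [hsq, sq σ, sq τ]⟩

end DisjointSupport

/-- If the point configuration of the line spanned by `u` and `v` consists of exactly
two points (every coordinate pair `(u i, v i)` is proportional to `p` or to `q`), then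
the coordinate-wise square of the line is again a line: the image of its affine cone
under coordinate-wise squaring is a `2`-dimensional linear subspace. -/
theorem square_of_line_two_points (m : ℕ) (u v : Fin m → ℂ)
    (huv : LinearIndependent ℂ ![u, v]) (p q : ℂ × ℂ)
    (h : ∀ i, (∃ c : ℂ, (u i, v i) = c • p) ∨ (∃ c : ℂ, (u i, v i) = c • q)) :
    ∃ W : Submodule ℂ (Fin m → ℂ), Module.finrank ℂ W = 2 ∧
      (fun x : Fin m → ℂ => fun i => (x i) ^ 2) ''
          {x : Fin m → ℂ | ∃ a b : ℂ, x = a • u + b • v}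
        = (W : Set (Fin m → ℂ)) := by
  obtain ⟨α, β, hαβ, hu, hv⟩ := exists_mul_eq_zero_of_forall_mem_lines h
  have hspan : span ℂ {u, v} = span ℂ {α, β} := by
    refine eq_of_le_of_finrank_le (span_le.mpr ?_) ?_
    · rintro _ (rfl | rfl)
      exacts [mem_span_pair.mpr ⟨p.1, q.1, hu.symm⟩, mem_span_pair.mpr ⟨p.2, q.2, hv.symm⟩]
    · rw [finrank_span_pair_eq_two_iff.mpr huv]
      exact finrank_span_pair_le_two α β
  have hαβ_ind : LinearIndependent ℂ ![α, β] := by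
    rw [← finrank_span_pair_eq_two_iff, ← hspan, finrank_span_pair_eq_two_iff]
    exact huv
  have hsq_ind : LinearIndependent ℂ ![α ^ 2, β ^ 2] :=
    linearIndependent_pair_of_mul_eq_zero (by rw [← mul_pow, hαβ, zero_pow two_ne_zero])
      (pow_ne_zero 2 (hαβ_ind.ne_zero 0)) (pow_ne_zero 2 (hαβ_ind.ne_zero 1))
  refine ⟨span ℂ {α ^ 2, β ^ 2}, finrank_span_pair_eq_two_iff.mpr hsq_ind, ?_⟩
  rw [setOf_exists_smul_add_smul_eq_span_pair, hspan]
  exact image_sq_span_pair_of_mul_eq_zero IsAlgClosed.exists_eq_mul_self hαβ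
end

section
/- Let u, v : Fin m → ℂ be linearly independent over ℂ, and suppose there exist indices i, j, k such that the three pairs (u i, v i), (u j, v j), (u k, v k) ∈ ℂ × ℂ are pairwise linearly independent. Then there exists an injective ℂ-linear map C : (Fin 3 → ℂ) → (Fin m → ℂ) such that (fun x i => (x i)^2) '' {a • u + b • v | a b : ℂ} = C '' {w | ∃ a b : ℂ, w = ![a^2, a*b, b^2]}. (If the point configuration of a line in ℙ^n has more than two points, the coordinate-wise square of the line is a linearly re-embedded smooth conic, i.e., a linear re-embedding of the second Veronese curve.) -/
/-!
Since `(a u_l + b v_l)² = a² u_l² + 2ab u_l v_l + b² v_l²`, the coordinatewise square of the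
line is the image of the cone `{(a², ab, b²)}` under the matrix with rows
`(u_l², 2 u_l v_l, v_l²)`. Its rows `i, j, k` form a homogeneous Vandermonde matrix, whose
determinant is twice the product of the three `2 × 2` minors of the pairs
`(u_i, v_i), (u_j, v_j), (u_k, v_k)`; these are nonzero by pairwise independence, so the
matrix is injective.
-/

open Matrix

section

variable {K ι : Type*}

lemma det_ne_zero_of_linearIndependent_pair [Field K] {p q : K × K}
    (h : LinearIndependent K ![p, q]) : p.1 * q.2 - q.1 * p.2 ≠ 0 := by
  intro hdet
  have hp2 := (LinearIndependent.pair_iff.mp h q.2 (-p.2) (by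
    ext
    · simp only [Prod.fst_add, Prod.smul_fst, smul_eq_mul, Prod.fst_zero]
      linear_combination hdet
    · simp only [Prod.snd_add, Prod.smul_snd, smul_eq_mul, Prod.snd_zero]
      ring)).2
  have hp1 := (LinearIndependent.pair_iff.mp h q.1 (-p.1) (by
    ext
    · simp only [Prod.fst_add, Prod.smul_fst, smul_eq_mul, Prod.fst_zero]
      ring
    · simp only [Prod.snd_add, Prod.smul_snd, smul_eq_mul, Prod.snd_zero]
      linear_combination -hdet)).2
  exact h.ne_zero 0 (Prod.ext (by simpa using hp1) (by simpa using hp2))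

def conicMatrix [CommRing K] (u v : ι → K) : Matrix ι (Fin 3) K :=
  Matrix.of fun l => ![u l ^ 2, 2 * u l * v l, v l ^ 2]

lemma conicMatrix_mulVec [CommRing K] (u v : ι → K) (a b : K) :
    conicMatrix u v *ᵥ ![a ^ 2, a * b, b ^ 2] = fun l => (a * u l + b * v l) ^ 2 := by
  ext l
  simp [conicMatrix, mulVec, dotProduct, Fin.sum_univ_three]
  ring

lemma det_conicMatrix_submatrix [CommRing K] (u v : ι → K) (i j k : ι) :
    ((conicMatrix u v).submatrix ![i, j, k] id).det =
      2 * ((u i * v j - u j * v i) * (u i * v k - u k * v i) * (u j * v k - u k * v j)) := by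
  rw [det_fin_three]
  simp [conicMatrix]
  ring

lemma conicMatrix_mulVecLin_injective [Field K] [NeZero (2 : K)] {u v : ι → K} {i j k : ι}
    (hij : LinearIndependent K ![(u i, v i), (u j, v j)])
    (hik : LinearIndependent K ![(u i, v i), (u k, v k)])
    (hjk : LinearIndependent K ![(u j, v j), (u k, v k)]) :
    Function.Injective (conicMatrix u v).mulVecLin := by
  have hdet : ((conicMatrix u v).submatrix ![i, j, k] id).det ≠ 0 := by
    rw [det_conicMatrix_submatrix]
    exact mul_ne_zero two_ne_zero <| mul_ne_zero (mul_ne_zero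
      (det_ne_zero_of_linearIndependent_pair hij) (det_ne_zero_of_linearIndependent_pair hik))
      (det_ne_zero_of_linearIndependent_pair hjk)
  rw [injective_iff_map_eq_zero]
  intro w hw
  exact eq_zero_of_mulVec_eq_zero hdet (funext fun r => congrFun hw (![i, j, k] r))

end

theorem square_of_line_conic_general (m : ℕ) (u v : Fin m → ℂ)
    (i j k : Fin m)
    (hij : LinearIndependent ℂ ![(u i, v i), (u j, v j)])
    (hik : LinearIndependent ℂ ![(u i, v i), (u k, v k)])
    (hjk : LinearIndependent ℂ ![(u j, v j), (u k, v k)]) :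
    ∃ C : (Fin 3 → ℂ) →ₗ[ℂ] (Fin m → ℂ), Function.Injective C ∧
      (fun x : Fin m → ℂ => fun l => (x l) ^ 2) ''
          {x : Fin m → ℂ | ∃ a b : ℂ, x = a • u + b • v}
        = C '' {w : Fin 3 → ℂ | ∃ a b : ℂ, w = ![a ^ 2, a * b, b ^ 2]} := by
  refine ⟨(conicMatrix u v).mulVecLin, conicMatrix_mulVecLin_injective hij hik hjk, ?_⟩
  ext x
  constructor
  · rintro ⟨_, ⟨a, b, rfl⟩, rfl⟩
    exact ⟨_, ⟨a, b, rfl⟩, by simp [conicMatrix_mulVec]⟩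
  · rintro ⟨_, ⟨a, b, rfl⟩, rfl⟩
    exact ⟨a • u + b • v, ⟨a, b, rfl⟩, by simp [conicMatrix_mulVec]⟩

/-- If the point configuration of the line spanned by `u` and `v` contains at least
three distinct points (three pairwise linearly independent coordinate pairs), then the
coordinate-wise square of the line is a linear re-embedding of the affine cone over
the second Veronese curve `{(a², ab, b²)}`. -/
theorem square_of_line_conic (m : ℕ) (u v : Fin m → ℂ)
    (huv : LinearIndependent ℂ ![u, v]) (i j k : Fin m)
    (hij : LinearIndependent ℂ ![(u i, v i), (u j, v j)])
    (hik : LinearIndependent ℂ ![(u i, v i), (u k, v k)])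
    (hjk : LinearIndependent ℂ ![(u j, v j), (u k, v k)]) :
    ∃ C : (Fin 3 → ℂ) →ₗ[ℂ] (Fin m → ℂ), Function.Injective C ∧
      (fun x : Fin m → ℂ => fun l => (x l) ^ 2) ''
          {x : Fin m → ℂ | ∃ a b : ℂ, x = a • u + b • v}
        = C '' {w : Fin 3 → ℂ | ∃ a b : ℂ, w = ![a ^ 2, a * b, b ^ 2]} :=
  square_of_line_conic_general m u v i j k hij hik hjk
end

section
/- Let r ≥ 1 and let B be an m × K complex matrix with the property that the only homogeneous polynomial of degree r in K variables over ℂ vanishing at every row of B is the zero polynomial. Then there exists an injective ℂ-linear map C from the space of homogeneous degree-r polynomials in K variables over ℂ to Fin m → ℂ such that ψ_r '' {B.mulVec v | v : Fin K → ℂ} = C '' {p | ∃ v : Fin K → ℂ, p = (∑ j, v j • X j)^r}. (If the point configuration associated to a linear space does not lie on any degree-r hypersurface, the coordinate-wise r-th power of the linear space is a linear re-embedding of the r-th Veronese variety.) -/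
open MvPolynomial

lemma veronese_hom_aux (r K : ℕ) (v : Fin K → ℂ) :
    ((∑ j, v j • X j : MvPolynomial (Fin K) ℂ) ^ r).IsHomogeneous r := by
  have h1 : (∑ j, v j • X j : MvPolynomial (Fin K) ℂ) ∈ homogeneousSubmodule (Fin K) ℂ 1 :=
    Submodule.sum_mem _ fun j _ => Submodule.smul_mem _ _
      ((mem_homogeneousSubmodule 1 (X j)).mpr (isHomogeneous_X ℂ j))
  simpa using ((mem_homogeneousSubmodule 1 _).mp h1).pow r

/-- If no nonzero homogeneous polynomial of degree `r` vanishes at every row of `B`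
(the point configuration lies on no degree-`r` hypersurface), then the coordinate-wise
`r`-th power of the linear space parametrized by `B` is a linear re-embedding of the
(affine cone over the) `r`-th Veronese variety. -/
theorem power_of_linear_space_veronese (r : ℕ) (hr : 1 ≤ r) (m K : ℕ)
    (B : Matrix (Fin m) (Fin K) ℂ)
    (hB : ∀ p : MvPolynomial (Fin K) ℂ, p.IsHomogeneous r →
      (∀ i, eval (fun j => B i j) p = 0) → p = 0) :
    ∃ C : (homogeneousSubmodule (Fin K) ℂ r) →ₗ[ℂ] (Fin m → ℂ),
      Function.Injective C ∧
      (fun x : Fin m → ℂ => fun i => (x i) ^ r) ''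
          {y : Fin m → ℂ | ∃ v : Fin K → ℂ, y = B.mulVec v}
        = C '' {p : homogeneousSubmodule (Fin K) ℂ r |
            ∃ v : Fin K → ℂ,
              (p : MvPolynomial (Fin K) ℂ) = (∑ j, v j • X j) ^ r} := by
  set C : (homogeneousSubmodule (Fin K) ℂ r) →ₗ[ℂ] (Fin m → ℂ) :=
    { toFun := fun p i => eval (fun j => B i j) (p : MvPolynomial (Fin K) ℂ)
      map_add' := by intro p q; funext i; simp
      map_smul' := by intro c p; funext i; simp } with hC
  have hCval : ∀ (p : homogeneousSubmodule (Fin K) ℂ r) (i : Fin m),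
      C p i = eval (fun j => B i j) (p : MvPolynomial (Fin K) ℂ) := fun _ _ => rfl
  have hkey : ∀ (v : Fin K → ℂ) (i : Fin m),
      eval (fun j => B i j) ((∑ j, v j • X j : MvPolynomial (Fin K) ℂ) ^ r)
        = (B.mulVec v i) ^ r := by
    intro v i
    simp [Matrix.mulVec, dotProduct, mul_comm]
  refine ⟨C, ?_, ?_⟩
  · intro p q h
    apply Subtype.ext
    have hhom : ((p : MvPolynomial (Fin K) ℂ) - q).IsHomogeneous r :=
      (mem_homogeneousSubmodule _ _).mp (Submodule.sub_mem _ p.2 q.2)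
    have := hB _ hhom (fun i => by
      have := congrFun h i
      simp only [hCval] at this
      simp [this])
    exact sub_eq_zero.mp this
  · ext x
    constructor
    · rintro ⟨y, ⟨v, rfl⟩, rfl⟩
      refine ⟨⟨(∑ j, v j • X j) ^ r, veronese_hom_aux r K v⟩, ⟨v, rfl⟩, ?_⟩
      funext i
      simp [hCval, hkey]
    · rintro ⟨p, ⟨v, hp⟩, rfl⟩
      refine ⟨B.mulVec v, ⟨v, rfl⟩, ?_⟩
      funext i
      simp [hCval, hp, hkey]
end

section
/- Let B be an m × 3 complex matrix of rank 3, and suppose there exist three vectors p, q, w ∈ ℂ³ such that every row of B is a scalar multiple of p, of q, or of w. Then there exists a ℂ-subspace W of Fin m → ℂ of dimension 3 such that (fun x i => (x i)^2) '' {B.mulVec v | v : Fin 3 → ℂ} = W. (If the point configuration of a plane in ℙ^n consists of exactly three points, the coordinate-wise square of the plane is again a plane.) -/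
open Matrix

/-!
Group the rows of `B` by the point they represent: `B i = c i • P (σ i)` for a `3 × 3` matrix
`P` with rows `p, q, w`. Then `B v = c * ((P v) ∘ σ)`, and squaring coordinate-wise gives
`(B v)² = c² * ((P v)² ∘ σ)`. Rank `3` forces `P` to be invertible, so `P v`, and with it
`(P v)²`, ranges over all of `ℂ³`. Hence the squared cone is the image of the linear map
`a ↦ c² * (a ∘ σ)`, which has the same kernel, hence the same rank, as `a ↦ c * (a ∘ σ)`,
the map whose image is the original plane.
-/

section ScaledPullback

variable {K : Type*} [Field K] {m ι : Type*}

def scaledPullback (d : m → K) (σ : m → ι) : (ι → K) →ₗ[K] (m → K) :=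
  LinearMap.mulLeft K d ∘ₗ LinearMap.funLeft K K σ

@[simp]
theorem scaledPullback_apply (d : m → K) (σ : m → ι) (a : ι → K) (i : m) :
    scaledPullback d σ a i = d i * a (σ i) :=
  rfl

theorem ker_scaledPullback_congr {d d' : m → K} (hd : ∀ i, d i = 0 ↔ d' i = 0) (σ : m → ι) :
    LinearMap.ker (scaledPullback d σ) = LinearMap.ker (scaledPullback d' σ) := by
  ext a
  simp only [LinearMap.mem_ker, funext_iff, scaledPullback_apply, Pi.zero_apply, mul_eq_zero, hd]

theorem finrank_range_scaledPullback_congr [Fintype ι] {d d' : m → K}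
    (hd : ∀ i, d i = 0 ↔ d' i = 0) (σ : m → ι) :
    Module.finrank K (LinearMap.range (scaledPullback d σ)) =
      Module.finrank K (LinearMap.range (scaledPullback d' σ)) := by
  have h := (scaledPullback d σ).finrank_range_add_finrank_ker
  rw [ker_scaledPullback_congr hd, ← (scaledPullback d' σ).finrank_range_add_finrank_ker] at h
  omega

theorem image_sq_range_scaledPullback [IsAlgClosed K] (d : m → K) (σ : m → ι) :
    (fun x : m → K => fun i => x i ^ 2) '' Set.range (scaledPullback d σ) =
      Set.range (scaledPullback (d ^ 2) σ) := by
  ext x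
  constructor
  · rintro ⟨_, ⟨a, rfl⟩, rfl⟩
    exact ⟨a ^ 2, by ext; simp [mul_pow]⟩
  · rintro ⟨a, rfl⟩
    choose s hs using fun k => IsAlgClosed.exists_pow_nat_eq (a k) two_pos
    exact ⟨_, ⟨s, rfl⟩, by ext; simp [mul_pow, hs]⟩

end ScaledPullback

section RowsProportional

variable {K : Type*} [Field K] {m n ι : Type*} [Fintype n]

theorem mulVecLin_eq_scaledPullback_comp {B : Matrix m n K} {P : Matrix ι n K} {σ : m → ι}
    {c : m → K} (hB : ∀ i, B i = c i • P (σ i)) :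
    B.mulVecLin = scaledPullback c σ ∘ₗ P.mulVecLin := by
  ext v i
  simp [mulVec, hB, dotProduct, Finset.mul_sum, mul_assoc]

theorem exists_image_sq_range_mulVec_eq_submodule [IsAlgClosed K] [Fintype ι]
    {B : Matrix m n K} {P : Matrix ι n K} {σ : m → ι} {c : m → K}
    (hB : ∀ i, B i = c i • P (σ i)) (hrank : B.rank = Fintype.card ι) :
    ∃ W : Submodule K (m → K), Module.finrank K W = Fintype.card ι ∧
      (fun x : m → K => fun i => x i ^ 2) '' {y | ∃ v, y = B *ᵥ v} = (W : Set (m → K)) := by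
  have hBP := mulVecLin_eq_scaledPullback_comp hB
  have hP : LinearMap.range P.mulVecLin = ⊤ := by
    refine Submodule.eq_top_of_finrank_eq (le_antisymm (Submodule.finrank_le _) ?_)
    calc Module.finrank K (ι → K) = B.rank := by rw [hrank, Module.finrank_fintype_fun_eq_card]
      _ ≤ _ := by
        rw [Matrix.rank, hBP, LinearMap.range_comp]
        exact Submodule.finrank_map_le _ _
  have hrange : LinearMap.range B.mulVecLin = LinearMap.range (scaledPullback c σ) := by
    rw [hBP, LinearMap.range_comp_of_range_eq_top _ hP]
  have hcone : {y | ∃ v, y = B *ᵥ v} = Set.range (scaledPullback c σ) := by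
    rw [← LinearMap.coe_range, ← hrange, LinearMap.coe_range]
    ext y
    simp [eq_comm]
  refine ⟨LinearMap.range (scaledPullback (c ^ 2) σ), ?_, ?_⟩
  · rw [finrank_range_scaledPullback_congr (d' := c) (by simp) σ, ← hrange]
    exact hrank
  · rw [hcone, image_sq_range_scaledPullback, LinearMap.coe_range]

end RowsProportional

/-- If the point configuration of a plane consists of exactly three points (every row
of the rank-3 matrix `B` is proportional to one of three fixed vectors), then the
coordinate-wise square of the plane is again a plane: the image of its affine cone
under coordinate-wise squaring is a `3`-dimensional linear subspace. -/
theorem square_of_plane_three_points (m : ℕ) (B : Matrix (Fin m) (Fin 3) ℂ)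
    (hrank : B.rank = 3) (p q w : Fin 3 → ℂ)
    (h : ∀ i, (∃ c : ℂ, (fun j => B i j) = c • p) ∨
        (∃ c : ℂ, (fun j => B i j) = c • q) ∨
        (∃ c : ℂ, (fun j => B i j) = c • w)) :
    ∃ W : Submodule ℂ (Fin m → ℂ), Module.finrank ℂ W = 3 ∧
      (fun x : Fin m → ℂ => fun i => (x i) ^ 2) ''
          {y : Fin m → ℂ | ∃ v : Fin 3 → ℂ, y = B.mulVec v}
        = (W : Set (Fin m → ℂ)) := by
  have hrows : ∀ i, ∃ k : Fin 3, ∃ c : ℂ, B i = c • ![p, q, w] k := by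
    intro i
    rcases h i with ⟨c, hc⟩ | ⟨c, hc⟩ | ⟨c, hc⟩
    exacts [⟨0, c, hc⟩, ⟨1, c, hc⟩, ⟨2, c, hc⟩]
  choose σ c hσ using hrows
  simpa using exists_image_sq_range_mulVec_eq_submodule (P := Matrix.of ![p, q, w]) hσ
    (by rwa [Fintype.card_fin])
end

section
/- Let B be an m × 3 complex matrix of rank 3, and suppose there exist a two-dimensional ℂ-subspace T of ℂ³ and a vector w ∉ T such that every row of B either lies in T or is a scalar multiple of w, and at least three pairwise non-proportional rows of B lie in T. Then there exists an injective ℂ-linear map C : (Fin 4 → ℂ) → (Fin m → ℂ) such that (fun x i => (x i)^2) '' {B.mulVec v | v : Fin 3 → ℂ} = C '' {y : Fin 4 → ℂ | (y 1)^2 + (y 2)^2 + (y 3)^2 − 2*(y 1)*(y 2) − 2*(y 2)*(y 3) − 2*(y 3)*(y 1) = 0}. (If all but one of the points of the point configuration of a plane lie on a line, and at least three do, the coordinate-wise square of the plane is a linearly re-embedded quadric surface, given by the stated rank-3 quadric in ℙ³.) -/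
open Matrix

/-- Two vectors are non-proportional: neither is a scalar multiple of the other. -/
def NonProportional {m : ℕ} (x y : Fin m → ℂ) : Prop :=
  (∀ c : ℂ, x ≠ c • y) ∧ (∀ c : ℂ, y ≠ c • x)

/-!
Write `B = A * Q`, where the rows of the invertible matrix `Q` are `w` followed by a basis
`t₁, t₂` of `T`. Every row of `A` is then `(c, 0, 0)` or `(0, a, b)`, so for `u = Q *ᵥ v`

  `(A *ᵥ u)ᵢ² = c² u₀² + a² u₁² + b² u₂² + a b ((u₁ + u₂)² - u₁² - u₂²)`,

which is linear in `(u₀², u₁², u₂², (u₁ + u₂)²)`. Over an algebraically closed field these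
points sweep out exactly the quadric cone `(y₃ - y₁ - y₂)² = 4 y₁ y₂` of the statement. The
linear map is injective because a row `(c, 0, 0)` with `c ≠ 0` recovers `y₀`, and a binary
quadratic form vanishing at the three pairwise non-proportional pairs `(a, b)` is zero.
-/

section CommRing

variable {K : Type*} [CommRing K] {m : ℕ}

def conePoint (u : Fin 3 → K) : Fin 4 → K := ![u 0 ^ 2, u 1 ^ 2, u 2 ^ 2, (u 1 + u 2) ^ 2]

def squaringMatrix (A : Matrix (Fin m) (Fin 3) K) : Matrix (Fin m) (Fin 4) K :=
  of fun i => ![A i 0 ^ 2, A i 1 ^ 2 - A i 1 * A i 2, A i 2 ^ 2 - A i 1 * A i 2, A i 1 * A i 2]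

theorem squaringMatrix_mulVec_apply (A : Matrix (Fin m) (Fin 3) K) (y : Fin 4 → K) (i : Fin m) :
    (squaringMatrix A *ᵥ y) i =
      A i 0 ^ 2 * y 0 + A i 1 ^ 2 * y 1 + A i 2 ^ 2 * y 2 + A i 1 * A i 2 * (y 3 - y 1 - y 2) := by
  simp only [squaringMatrix, mulVec, dotProduct, Fin.sum_univ_four, of_apply, cons_val_zero,
    cons_val_one, cons_val]
  ring

theorem sq_mulVec_apply {A : Matrix (Fin m) (Fin 3) K} {i : Fin m}
    (hi : A i 0 = 0 ∨ A i 1 = 0 ∧ A i 2 = 0) (u : Fin 3 → K) :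
    (A *ᵥ u) i ^ 2 = (squaringMatrix A *ᵥ conePoint u) i := by
  rw [squaringMatrix_mulVec_apply]
  simp only [mulVec, dotProduct, Fin.sum_univ_three, conePoint, cons_val_zero, cons_val_one,
    cons_val]
  rcases hi with h | ⟨h₁, h₂⟩
  · rw [h]; ring
  · rw [h₁, h₂]; ring

theorem range_mulVec_mul_of_isUnit {l n : Type*} [Fintype n] [DecidableEq n]
    (A : Matrix l n K) {Q : Matrix n n K} (hQ : IsUnit Q) :
    Set.range (A * Q).mulVec = Set.range A.mulVec := by
  have h : (A * Q).mulVec = A.mulVec ∘ Q.mulVec := funext fun v => (mulVec_mulVec v A Q).symm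
  rw [h, (mulVec_surjective_iff_isUnit.2 hQ).range_comp]

end CommRing

section Field

variable {K : Type*} [Field K] {m : ℕ}

theorem binaryQuadratic_eq_zero_of_three_roots {a₁ b₁ a₂ b₂ a₃ b₃ p q r : K}
    (h₁₂ : a₁ * b₂ - a₂ * b₁ ≠ 0) (h₁₃ : a₁ * b₃ - a₃ * b₁ ≠ 0)
    (h₂₃ : a₂ * b₃ - a₃ * b₂ ≠ 0)
    (e₁ : a₁ ^ 2 * p + a₁ * b₁ * q + b₁ ^ 2 * r = 0)
    (e₂ : a₂ ^ 2 * p + a₂ * b₂ * q + b₂ ^ 2 * r = 0)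
    (e₃ : a₃ ^ 2 * p + a₃ * b₃ * q + b₃ ^ 2 * r = 0) :
    p = 0 ∧ q = 0 ∧ r = 0 := by
  let V : Matrix (Fin 3) (Fin 3) K :=
    !![a₁ ^ 2, a₁ * b₁, b₁ ^ 2; a₂ ^ 2, a₂ * b₂, b₂ ^ 2; a₃ ^ 2, a₃ * b₃, b₃ ^ 2]
  have hdet : V.det = (a₁ * b₂ - a₂ * b₁) * (a₁ * b₃ - a₃ * b₁) * (a₂ * b₃ - a₃ * b₂) := by
    rw [det_fin_three]
    simp only [V, of_apply, cons_val', cons_val_zero, cons_val_one, cons_val, cons_val_fin_one]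
    ring
  have hV : V *ᵥ ![p, q, r] = 0 := by
    ext i
    fin_cases i
    · simpa [V, mulVec, dotProduct, Fin.sum_univ_three] using e₁
    · simpa [V, mulVec, dotProduct, Fin.sum_univ_three] using e₂
    · simpa [V, mulVec, dotProduct, Fin.sum_univ_three] using e₃
  have h := eq_zero_of_mulVec_eq_zero (by rw [hdet]; exact mul_ne_zero (mul_ne_zero h₁₂ h₁₃) h₂₃) hV
  exact ⟨congrFun h 0, congrFun h 1, congrFun h 2⟩

theorem injective_squaringMatrix_mulVecLin {A : Matrix (Fin m) (Fin 3) K} {i₀ p q r : Fin m}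
    (h₀ : A i₀ 0 ≠ 0 ∧ A i₀ 1 = 0 ∧ A i₀ 2 = 0)
    (hpq : A p 1 * A q 2 - A q 1 * A p 2 ≠ 0) (hpr : A p 1 * A r 2 - A r 1 * A p 2 ≠ 0)
    (hqr : A q 1 * A r 2 - A r 1 * A q 2 ≠ 0) :
    Function.Injective (squaringMatrix A).mulVecLin := by
  refine (injective_iff_map_eq_zero _).2 fun y hy => ?_
  have hrow : ∀ i, A i 0 ^ 2 * y 0 + A i 1 ^ 2 * y 1 + A i 2 ^ 2 * y 2
      + A i 1 * A i 2 * (y 3 - y 1 - y 2) = 0 := fun i => by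
    rw [← squaringMatrix_mulVec_apply]; exact congrFun hy i
  obtain ⟨hc₀, ha₀, hb₀⟩ := h₀
  have hy₀ : y 0 = 0 := by simpa [ha₀, hb₀, hc₀] using hrow i₀
  have hbin : ∀ i, A i 1 ^ 2 * y 1 + A i 1 * A i 2 * (y 3 - y 1 - y 2) + A i 2 ^ 2 * y 2 = 0 :=
    fun i => by linear_combination hrow i - A i 0 ^ 2 * hy₀
  obtain ⟨hy₁, hy₃, hy₂⟩ :=
    binaryQuadratic_eq_zero_of_three_roots hpq hpr hqr (hbin p) (hbin q) (hbin r)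
  ext k
  fin_cases k
  · exact hy₀
  · exact hy₁
  · exact hy₂
  · show y 3 = 0
    linear_combination hy₃ + hy₁ + hy₂

theorem exists_row_notMem_of_finrank_lt_rank {l n : Type*} [Finite l] [Fintype n]
    {B : Matrix l n K} {T : Submodule K (n → K)} (h : Module.finrank K T < B.rank) :
    ∃ i, B i ∉ T := by
  by_contra! hall
  refine h.not_ge ?_
  rw [rank_eq_finrank_span_row]
  exact Submodule.finrank_mono (Submodule.span_le.2 (Set.range_subset_iff.2 hall))

theorem exists_eq_mul_of_rows_mem_or_smul (B : Matrix (Fin m) (Fin 3) K)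
    {T : Submodule K (Fin 3 → K)} (hT : Module.finrank K T = 2) {w : Fin 3 → K} (hw : w ∉ T)
    (hrows : ∀ i, B i ∈ T ∨ ∃ c : K, B i = c • w) :
    ∃ (A : Matrix (Fin m) (Fin 3) K) (Q : Matrix (Fin 3) (Fin 3) K), IsUnit Q ∧ B = A * Q ∧
      ∀ i, (B i ∈ T → A i 0 = 0) ∧ (B i ∉ T → A i 0 ≠ 0 ∧ A i 1 = 0 ∧ A i 2 = 0) := by
  let t := Module.finBasisOfFinrankEq K T hT
  let Q : Matrix (Fin 3) (Fin 3) K := Fin.cons w fun k => (t k : Fin 3 → K)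
  have hQ : IsUnit Q := by
    refine linearIndependent_rows_iff_isUnit.1 (linearIndependent_finCons.2 ⟨?_, ?_⟩)
    · exact t.linearIndependent.map' T.subtype T.ker_subtype
    · rwa [Set.range_comp', (Submodule.span_val_image_eq_iff T _).2 t.span_eq]
  have hcoord : ∀ i, ∃ x : Fin 3 → K, B i = x ᵥ* Q ∧
      (B i ∈ T → x 0 = 0) ∧ (B i ∉ T → x 0 ≠ 0 ∧ x 1 = 0 ∧ x 2 = 0) := by
    intro i
    by_cases hi : B i ∈ T
    · refine ⟨Fin.cons 0 (t.repr ⟨B i, hi⟩), ?_, fun _ => rfl, fun h => absurd hi h⟩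
      have h := congrArg Subtype.val (t.sum_repr ⟨B i, hi⟩)
      simp only [Submodule.coe_sum, Submodule.coe_smul] at h
      rw [vecMul_eq_sum, Fin.sum_univ_succ]
      simp only [Fin.cons_zero, Fin.cons_succ, zero_smul, zero_add, Q]
      exact h.symm
    · obtain ⟨c, hc⟩ := (hrows i).resolve_left hi
      have hc₀ : c ≠ 0 := by rintro rfl; exact hi (by simp [hc])
      refine ⟨Pi.single 0 c, ?_, fun h => absurd h hi, fun _ => ⟨by simpa, by simp, by simp⟩⟩
      rw [single_vecMul, hc]
      rfl
  choose x hx using hcoord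
  exact ⟨x, Q, hQ, funext fun i => (hx i).1, fun i => (hx i).2⟩

theorem range_conePoint [IsAlgClosed K] :
    Set.range (conePoint (K := K)) = {y : Fin 4 → K |
      y 1 ^ 2 + y 2 ^ 2 + y 3 ^ 2 - 2 * y 1 * y 2 - 2 * y 2 * y 3 - 2 * y 3 * y 1 = 0} := by
  ext y
  constructor
  · rintro ⟨u, rfl⟩
    change _ = _
    simp only [conePoint, cons_val_zero, cons_val_one, cons_val]
    ring
  · intro (hy : _ = _)
    obtain ⟨u, hu⟩ := IsAlgClosed.exists_pow_nat_eq (y 0) two_pos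
    obtain ⟨s, hs⟩ := IsAlgClosed.exists_pow_nat_eq (y 1) two_pos
    obtain ⟨t, ht⟩ := IsAlgClosed.exists_pow_nat_eq (y 2) two_pos
    have hroots : (y 3 - y 1 - y 2 - 2 * s * t) * (y 3 - y 1 - y 2 + 2 * s * t) = 0 := by
      linear_combination hy - 4 * y 1 * ht - 4 * t ^ 2 * hs
    rcases mul_eq_zero.1 hroots with h | h
    · refine ⟨![u, s, t], ?_⟩
      ext i
      fin_cases i <;> simp only [conePoint, Fin.zero_eta, Fin.mk_one, Fin.reduceFinMk,
        cons_val_zero, cons_val_one, cons_val, hu, hs, ht]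
      linear_combination hs + ht - h
    · refine ⟨![u, s, -t], ?_⟩
      ext i
      fin_cases i <;> simp only [conePoint, Fin.zero_eta, Fin.mk_one, Fin.reduceFinMk,
        cons_val_zero, cons_val_one, cons_val, neg_sq, hu, hs, ht]
      linear_combination hs + ht - h

theorem image_sq_range_mulVec [IsAlgClosed K] {A : Matrix (Fin m) (Fin 3) K}
    (hA : ∀ i, A i 0 = 0 ∨ A i 1 = 0 ∧ A i 2 = 0) :
    (fun x : Fin m → K => fun i => x i ^ 2) '' Set.range A.mulVec =
      (squaringMatrix A).mulVec '' {y : Fin 4 → K |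
        y 1 ^ 2 + y 2 ^ 2 + y 3 ^ 2 - 2 * y 1 * y 2 - 2 * y 2 * y 3 - 2 * y 3 * y 1 = 0} := by
  rw [← range_conePoint, ← Set.range_comp, ← Set.range_comp]
  congr 1
  ext u i
  exact sq_mulVec_apply (hA i) u

end Field

theorem NonProportional.of_vecMul {n k : ℕ} {x y : Fin n → ℂ} {Q : Matrix (Fin n) (Fin k) ℂ}
    (h : NonProportional (x ᵥ* Q) (y ᵥ* Q)) : NonProportional x y :=
  ⟨fun c hc => h.1 c (by rw [hc, smul_vecMul]), fun c hc => h.2 c (by rw [hc, smul_vecMul])⟩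

theorem NonProportional.minor_ne_zero {x y : Fin 3 → ℂ} (h : NonProportional x y)
    (hx : x 0 = 0) (hy : y 0 = 0) : x 1 * y 2 - y 1 * x 2 ≠ 0 := by
  intro hd
  by_cases h₁ : x 1 = 0
  · by_cases h₂ : x 2 = 0
    · exact h.1 0 (by ext k; fin_cases k <;> simp [hx, h₁, h₂])
    · refine h.2 (y 2 / x 2) ?_
      have hy₁ : y 1 = 0 := by simpa [h₁, h₂] using hd
      ext k; fin_cases k <;> simp [hx, hy, h₁, hy₁, h₂]
  · refine h.2 (y 1 / x 1) ?_
    ext k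
    fin_cases k
    · simp [hx, hy]
    · simp [h₁]
    · show y 2 = y 1 / x 1 * x 2
      field_simp
      linear_combination hd

/-- If all but one of the points of the point configuration of a plane lie on a line,
and at least three (pairwise distinct) of them do, then the coordinate-wise square of
the plane is a linear re-embedding of the quadric surface
`y₁² + y₂² + y₃² − 2y₁y₂ − 2y₂y₃ − 2y₃y₁ = 0` in `ℙ³`. -/
theorem square_of_plane_points_on_line (m : ℕ) (B : Matrix (Fin m) (Fin 3) ℂ)
    (hrank : B.rank = 3) (T : Submodule ℂ (Fin 3 → ℂ))
    (hT : Module.finrank ℂ T = 2) (w : Fin 3 → ℂ) (hw : w ∉ T)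
    (hrows : ∀ i, (fun j => B i j) ∈ T ∨ ∃ c : ℂ, (fun j => B i j) = c • w)
    (hthree : ∃ i j k : Fin m,
      (fun l => B i l) ∈ T ∧ (fun l => B j l) ∈ T ∧ (fun l => B k l) ∈ T ∧
      NonProportional (fun l => B i l) (fun l => B j l) ∧
      NonProportional (fun l => B i l) (fun l => B k l) ∧
      NonProportional (fun l => B j l) (fun l => B k l)) :
    ∃ C : (Fin 4 → ℂ) →ₗ[ℂ] (Fin m → ℂ), Function.Injective C ∧
      (fun x : Fin m → ℂ => fun i => (x i) ^ 2) ''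
          {y : Fin m → ℂ | ∃ v : Fin 3 → ℂ, y = B.mulVec v}
        = C '' {y : Fin 4 → ℂ |
            (y 1) ^ 2 + (y 2) ^ 2 + (y 3) ^ 2
              - 2 * (y 1) * (y 2) - 2 * (y 2) * (y 3) - 2 * (y 3) * (y 1) = 0} := by
  obtain ⟨A, Q, hQ, rfl, hA⟩ := exists_eq_mul_of_rows_mem_or_smul B hT hw hrows
  obtain ⟨i₀, hi₀⟩ := exists_row_notMem_of_finrank_lt_rank (B := A * Q) (T := T) (by omega)
  obtain ⟨p, q, r, hp, hq, hr, hpq, hpr, hqr⟩ := hthree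
  have hminor : ∀ {i j}, (A * Q) i ∈ T → (A * Q) j ∈ T →
      NonProportional ((A * Q) i) ((A * Q) j) → A i 1 * A j 2 - A j 1 * A i 2 ≠ 0 :=
    fun hi hj hij => (NonProportional.of_vecMul hij).minor_ne_zero ((hA _).1 hi) ((hA _).1 hj)
  refine ⟨(squaringMatrix A).mulVecLin, injective_squaringMatrix_mulVecLin ((hA i₀).2 hi₀)
    (hminor hp hq hpq) (hminor hp hr hpr) (hminor hq hr hqr), ?_⟩
  have hrange : {y | ∃ v, y = (A * Q) *ᵥ v} = Set.range A.mulVec := by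
    rw [← range_mulVec_mul_of_isUnit A hQ]
    ext
    simp [eq_comm]
  rw [hrange, image_sq_range_mulVec fun i => (em _).imp (hA i).1 fun h => ((hA i).2 h).2]
  rfl
end

section
/- Let s ≥ 3. Work in the multivariate polynomial ring over ℂ whose variables y_{ab} are indexed by unordered pairs {a, b} of elements of Fin s (the entries of a generic symmetric s × s matrix, so y_{ab} = y_{ba}), and set D(a,b) := y_{aa} * y_{bb} − (y_{ab})^2. Then the ℂ-linear span of the set of polynomials {D(i,j) − D(j,k) + D(k,l) − D(l,i) : i, j, k, l ∈ Fin s pairwise distinct} has dimension s*(s−3)/2 (that is, C(s,2) − s). -/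
open MvPolynomial

/-- The principal 2×2 minor `D(a,b) = y_{aa} y_{bb} − y_{ab}²` of a generic symmetric
`s × s` matrix whose entries are variables indexed by unordered pairs. -/
noncomputable def genericPrincMinor (s : ℕ) (a b : Fin s) : MvPolynomial (Sym2 (Fin s)) ℂ :=
  X (Sym2.mk a a) * X (Sym2.mk b b) - (X (Sym2.mk a b)) ^ 2

/-!
Off the diagonal, the coefficient of `y_e²` in `D(a,b)` is `-1` if `e = {a,b}` and `0`
otherwise, so the minors `D(a,b)`, `a ≠ b`, are linearly independent and the span of the
relations is isomorphic to the span of the alternating 4-cycles `δ_ij - δ_jk + δ_kl - δ_li` among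
edge weights on the complete graph `K_s`. These cycles lie in the kernel of the unsigned
incidence map, which is onto `ℂ^s` because `K_s` contains triangles; hence the dimension is at
most `C(s,2) - s`. Conversely, modulo the alternating 4-cycles every edge is a combination of the
`s - 1` edges at a fixed vertex `q` and one more edge `pr`, so the dimension is at least
`C(s,2) - s`.
-/

open Module Submodule

namespace GenericPrincMinor

variable {s : ℕ}

lemma exists_pair_ne_of_three_le (hs : 3 ≤ s) (a : Fin s) :
    ∃ b c : Fin s, a ≠ b ∧ a ≠ c ∧ b ≠ c := by
  have : 1 < (Finset.univ.erase a).card := by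
    rw [Finset.card_erase_of_mem (Finset.mem_univ a), Finset.card_univ, Fintype.card_fin]
    omega
  obtain ⟨b, c, hb, hc, hbc⟩ := Finset.one_lt_card_iff.1 this
  exact ⟨b, c, (Finset.ne_of_mem_erase hb).symm, (Finset.ne_of_mem_erase hc).symm, hbc⟩

lemma succ_choose_two_sub_two_mul (hs : 3 ≤ s) : (s + 1).choose 2 - 2 * s = s * (s - 3) / 2 := by
  obtain ⟨t, rfl⟩ : ∃ t, s = t + 3 := ⟨s - 3, by omega⟩
  have : (t + 3 + 1) * (t + 3) = (t + 3) * t + 2 * (t + 3) * 2 := by ring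
  rw [Nat.choose_two_right, Nat.add_sub_cancel, this, Nat.add_mul_div_right _ _ two_pos,
    Nat.add_sub_cancel, Nat.add_sub_cancel]

noncomputable def sym2Minor : Sym2 (Fin s) → MvPolynomial (Sym2 (Fin s)) ℂ :=
  Sym2.lift ⟨genericPrincMinor s, fun a b => by
    rw [genericPrincMinor, genericPrincMinor, mul_comm, Sym2.eq_swap (a := a) (b := b)]⟩

@[simp] lemma sym2Minor_mk (a b : Fin s) : sym2Minor s(a, b) = genericPrincMinor s a b := rfl

lemma coeff_sq_sym2Minor {e : Sym2 (Fin s)} (he : ¬ e.IsDiag) (f : Sym2 (Fin s)) :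
    coeff (Finsupp.single e 2) (sym2Minor f) = if f = e then -1 else 0 := by
  induction f using Sym2.ind with | _ a b =>
  have hdiag : ∀ c : Fin s, s(c, c) ≠ e := fun c h => he (h ▸ Sym2.mk_isDiag_iff.2 rfl)
  have hne : Finsupp.single s(a, a) 1 + Finsupp.single s(b, b) 1 ≠ Finsupp.single e 2 := by
    intro h
    simpa [Finsupp.single_apply, hdiag] using DFunLike.congr_fun h e
  rw [sym2Minor_mk, genericPrincMinor, X_pow_eq_monomial, X, X, monomial_mul, coeff_sub,
    coeff_monomial, coeff_monomial, if_neg hne]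
  simp only [Finsupp.single_left_inj two_ne_zero]
  split_ifs <;> simp

noncomputable def minorMap : (Sym2 (Fin s) → ℂ) →ₗ[ℂ] MvPolynomial (Sym2 (Fin s)) ℂ :=
  Fintype.linearCombination ℂ sym2Minor

lemma coeff_sq_minorMap {e : Sym2 (Fin s)} (he : ¬ e.IsDiag) (v : Sym2 (Fin s) → ℂ) :
    coeff (Finsupp.single e 2) (minorMap v) = -v e := by
  simp [minorMap, Fintype.linearCombination_apply, coeff_sum, coeff_sq_sym2Minor he]

lemma eq_zero_of_minorMap_eq_zero {v : Sym2 (Fin s) → ℂ} (hdiag : ∀ a, v s(a, a) = 0)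
    (hv : minorMap v = 0) : v = 0 := by
  funext e
  induction e using Sym2.ind with | _ a b =>
  by_cases hab : a = b
  · rw [hab, hdiag, Pi.zero_apply]
  · simpa [hv] using (coeff_sq_minorMap (Sym2.mk_isDiag_iff.not.2 hab) v).symm

noncomputable def altCycle (i j k l : Fin s) : Sym2 (Fin s) → ℂ :=
  Pi.single s(i, j) 1 - Pi.single s(j, k) 1 + Pi.single s(k, l) 1 - Pi.single s(l, i) 1

lemma minorMap_altCycle (i j k l : Fin s) :
    minorMap (altCycle i j k l) = genericPrincMinor s i j - genericPrincMinor s j k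
      + genericPrincMinor s k l - genericPrincMinor s l i := by
  simp [altCycle, minorMap, Fintype.linearCombination_apply_single]

variable (s) in
def altCycles : Set (Sym2 (Fin s) → ℂ) :=
  {v | ∃ i j k l : Fin s,
    i ≠ j ∧ i ≠ k ∧ i ≠ l ∧ j ≠ k ∧ j ≠ l ∧ k ≠ l ∧ v = altCycle i j k l}

lemma image_minorMap_altCycles : minorMap '' altCycles s =
    {g : MvPolynomial (Sym2 (Fin s)) ℂ | ∃ i j k l : Fin s,
      i ≠ j ∧ i ≠ k ∧ i ≠ l ∧ j ≠ k ∧ j ≠ l ∧ k ≠ l ∧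
      g = genericPrincMinor s i j - genericPrincMinor s j k
          + genericPrincMinor s k l - genericPrincMinor s l i} := by
  ext g
  constructor
  · rintro ⟨_, ⟨i, j, k, l, hij, hik, hil, hjk, hjl, hkl, rfl⟩, rfl⟩
    exact ⟨i, j, k, l, hij, hik, hil, hjk, hjl, hkl, minorMap_altCycle i j k l⟩
  · rintro ⟨i, j, k, l, hij, hik, hil, hjk, hjl, hkl, rfl⟩
    exact ⟨_, ⟨i, j, k, l, hij, hik, hil, hjk, hjl, hkl, rfl⟩, minorMap_altCycle i j k l⟩

noncomputable def incidence : Sym2 (Fin s) → Fin s → ℂ :=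
  Sym2.lift ⟨fun a b => Pi.single a 1 + Pi.single b 1, fun _ _ => add_comm _ _⟩

/-- Edge weights live on `Sym2 (Fin s)`, loops included; recording the weights on loops next to
the vertex sums makes the kernel the loopless kernel of the unsigned incidence map. -/
noncomputable def incidenceDiag :
    (Sym2 (Fin s) → ℂ) →ₗ[ℂ] (Fin s → ℂ) × (Fin s → ℂ) :=
  (Fintype.linearCombination ℂ incidence).prod (LinearMap.funLeft ℂ ℂ Sym2.diag)

lemma incidenceDiag_single (a b : Fin s) :
    incidenceDiag (Pi.single s(a, b) 1) =
      (Pi.single a 1 + Pi.single b 1, if a = b then Pi.single a 1 else 0) := by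
  refine Prod.ext (by simp [incidenceDiag, incidence, Fintype.linearCombination_apply_single]) ?_
  funext c
  show (Pi.single s(a, b) (1 : ℂ) : Sym2 (Fin s) → ℂ) s(c, c) = _
  by_cases hab : a = b
  · subst hab
    simp [Pi.single_apply]
  · have : s(c, c) ≠ s(a, b) := fun h => hab (Sym2.mk_isDiag_iff.1 (h ▸ Sym2.diag_isDiag c))
    simp [hab, Pi.single_eq_of_ne this]

lemma incidenceDiag_altCycle {i j k l : Fin s} (hij : i ≠ j) (hjk : j ≠ k) (hkl : k ≠ l)
    (hli : l ≠ i) : incidenceDiag (altCycle i j k l) = 0 := by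
  simp only [altCycle, map_add, map_sub, incidenceDiag_single, if_neg hij, if_neg hjk,
    if_neg hkl, if_neg hli, Prod.mk_add_mk, Prod.mk_sub_mk, sub_zero, add_zero]
  exact Prod.mk_eq_zero.2 ⟨by abel, rfl⟩

lemma span_altCycles_le_ker : span ℂ (altCycles s) ≤ LinearMap.ker incidenceDiag := by
  rw [span_le]
  rintro _ ⟨i, j, k, l, hij, -, hil, hjk, -, hkl, rfl⟩
  exact incidenceDiag_altCycle hij hjk hkl hil.symm

lemma incidenceDiag_triangle {a b c : Fin s} (hab : a ≠ b) (hac : a ≠ c) (hbc : b ≠ c) :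
    incidenceDiag (Pi.single s(a, b) 1 + Pi.single s(a, c) 1 - Pi.single s(b, c) 1) =
      ((2 : ℂ) • Pi.single a 1, 0) := by
  simp only [map_add, map_sub, incidenceDiag_single, if_neg hab, if_neg hac, if_neg hbc,
    Prod.mk_add_mk, Prod.mk_sub_mk, sub_zero, add_zero, two_smul]
  congr 1
  abel

lemma incidenceDiag_surjective (hs : 3 ≤ s) : Function.Surjective (incidenceDiag (s := s)) := by
  rw [← LinearMap.range_eq_top, eq_top_iff,
    ← ((Pi.basisFun ℂ (Fin s)).prod (Pi.basisFun ℂ (Fin s))).span_eq, span_le]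
  rintro _ ⟨a | a, rfl⟩ <;> obtain ⟨b, c, hab, hac, hbc⟩ := exists_pair_ne_of_three_le hs a
  · refine ⟨(2 : ℂ)⁻¹ • (Pi.single s(a, b) 1 + Pi.single s(a, c) 1 - Pi.single s(b, c) 1),
      ?_⟩
    rw [map_smul, incidenceDiag_triangle hab hac hbc]
    simp
  · refine ⟨Pi.single s(a, a) 1 -
      (Pi.single s(a, b) 1 + Pi.single s(a, c) 1 - Pi.single s(b, c) 1), ?_⟩
    rw [map_sub, incidenceDiag_triangle hab hac hbc]
    simp [incidenceDiag_single, two_smul]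

lemma finrank_ker_incidenceDiag (hs : 3 ≤ s) :
    finrank ℂ (LinearMap.ker (incidenceDiag (s := s))) = (s + 1).choose 2 - 2 * s := by
  have h := LinearMap.finrank_range_add_finrank_ker (incidenceDiag (s := s))
  rw [LinearMap.range_eq_top.2 (incidenceDiag_surjective hs), finrank_top, finrank_prod,
    finrank_pi, finrank_pi, Sym2.card, Fintype.card_fin] at h
  omega

/-- The loops and the edges at `q`, except that the loop at `q`, already listed as `.inl q`, is
replaced by `pr` in the second family. -/
def complementEdge (p q r : Fin s) : Fin s ⊕ Fin s → Sym2 (Fin s)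
  | .inl a => s(a, a)
  | .inr j => if j = q then s(p, r) else s(q, j)

lemma span_altCycles_sup_eq_top {p q r : Fin s} (hpq : p ≠ q) (hpr : p ≠ r) (hqr : q ≠ r) :
    span ℂ (altCycles s) ⊔
      span ℂ (Set.range fun x => Pi.single (complementEdge p q r x) (1 : ℂ)) = ⊤ := by
  set M := span ℂ (altCycles s) ⊔
    span ℂ (Set.range fun x => Pi.single (complementEdge p q r x) (1 : ℂ))
  have cycle_mem {i j k l : Fin s} (hij : i ≠ j) (hik : i ≠ k) (hil : i ≠ l) (hjk : j ≠ k)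
      (hjl : j ≠ l) (hkl : k ≠ l) : altCycle i j k l ∈ M :=
    mem_sup_left (subset_span ⟨i, j, k, l, hij, hik, hil, hjk, hjl, hkl, rfl⟩)
  have complement_mem (x) : Pi.single (complementEdge p q r x) (1 : ℂ) ∈ M :=
    mem_sup_right (subset_span ⟨x, rfl⟩)
  have loop_mem (a : Fin s) : Pi.single s(a, a) (1 : ℂ) ∈ M := complement_mem (.inl a)
  have pr_mem : Pi.single s(p, r) (1 : ℂ) ∈ M := by
    simpa [complementEdge] using complement_mem (.inr q)
  have q_mem (j : Fin s) : Pi.single s(q, j) (1 : ℂ) ∈ M := by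
    by_cases hj : j = q
    · exact hj ▸ loop_mem q
    · simpa [complementEdge, hj] using complement_mem (.inr j)
  have p_mem (j : Fin s) (hjq : j ≠ q) : Pi.single s(p, j) (1 : ℂ) ∈ M := by
    by_cases hjp : j = p
    · exact hjp ▸ loop_mem p
    by_cases hjr : j = r
    · exact hjr ▸ pr_mem
    have hdecomp : Pi.single s(p, j) (1 : ℂ) = altCycle p j q r + Pi.single s(q, j) 1
        - Pi.single s(q, r) 1 + Pi.single s(p, r) 1 := by
      simp only [altCycle, Sym2.eq_swap (a := j), Sym2.eq_swap (a := r)]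
      abel
    rw [hdecomp]
    exact add_mem (sub_mem (add_mem (cycle_mem (Ne.symm hjp) hpq hpr hjq hjr hqr) (q_mem j))
      (q_mem r)) pr_mem
  have edge_mem (a b : Fin s) : Pi.single s(a, b) (1 : ℂ) ∈ M := by
    by_cases haq : a = q
    · exact haq ▸ q_mem b
    by_cases hbq : b = q
    · rw [Sym2.eq_swap, hbq]
      exact q_mem a
    by_cases hap : a = p
    · exact hap ▸ p_mem b hbq
    by_cases hbp : b = p
    · rw [Sym2.eq_swap, hbp]
      exact p_mem a haq
    by_cases hab : a = b
    · exact hab ▸ loop_mem b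
    have hdecomp : Pi.single s(a, b) (1 : ℂ) = altCycle a b q p + Pi.single s(q, b) 1
        - Pi.single s(q, p) 1 + Pi.single s(p, a) 1 := by
      simp only [altCycle, Sym2.eq_swap (a := b)]
      abel
    rw [hdecomp]
    exact add_mem (sub_mem (add_mem (cycle_mem hab haq hap hbq hbp (Ne.symm hpq)) (q_mem b))
      (q_mem p)) (p_mem a haq)
  rw [eq_top_iff, ← (Pi.basisFun ℂ (Sym2 (Fin s))).span_eq, span_le]
  rintro _ ⟨e, rfl⟩
  induction e using Sym2.ind with | _ a b => simpa using edge_mem a b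

theorem finrank_span_altCycles (hs : 3 ≤ s) :
    finrank ℂ (span ℂ (altCycles s)) = (s + 1).choose 2 - 2 * s := by
  refine le_antisymm ?_ ?_
  · rw [← finrank_ker_incidenceDiag hs]
    exact finrank_mono span_altCycles_le_ker
  · set q : Fin s := ⟨0, by omega⟩
    obtain ⟨p, r, hqp, hqr, hpr⟩ := exists_pair_ne_of_three_le hs q
    have hsup := finrank_add_le_finrank_add_finrank (span ℂ (altCycles s))
      (span ℂ (Set.range fun x => Pi.single (complementEdge p q r x) (1 : ℂ)))
    have hcompl := finrank_range_le_card (R := ℂ)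
      fun x => (Pi.single (complementEdge p q r x) 1 : Sym2 (Fin s) → ℂ)
    rw [span_altCycles_sup_eq_top (Ne.symm hqp) hpr hqr, finrank_top, finrank_pi, Sym2.card,
      Fintype.card_fin] at hsup
    rw [Fintype.card_sum, Fintype.card_fin] at hcompl
    unfold Set.finrank at hcompl
    omega

lemma finrank_map_minorMap_span_altCycles :
    finrank ℂ (map minorMap (span ℂ (altCycles s))) = finrank ℂ (span ℂ (altCycles s)) := by
  rw [← LinearMap.range_domRestrict]
  refine LinearMap.finrank_range_of_inj ((injective_iff_map_eq_zero _).2 fun v hv => ?_)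
  have hker : incidenceDiag (v : Sym2 (Fin s) → ℂ) = 0 := span_altCycles_le_ker v.2
  exact Subtype.ext (eq_zero_of_minorMap_eq_zero (congrFun (congrArg Prod.snd hker)) hv)

end GenericPrincMinor

open GenericPrincMinor in
/-- For `s ≥ 3`, the ℂ-linear span of the quadratic relations
`D(i,j) − D(j,k) + D(k,l) − D(l,i)` for pairwise distinct `i, j, k, l` has dimension
`s(s−3)/2 = C(s,2) − s`. -/
theorem finrank_span_G_relations (s : ℕ) (hs : 3 ≤ s) :
    Module.finrank ℂ (Submodule.span ℂ
      {g : MvPolynomial (Sym2 (Fin s)) ℂ | ∃ i j k l : Fin s,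
        i ≠ j ∧ i ≠ k ∧ i ≠ l ∧ j ≠ k ∧ j ≠ l ∧ k ≠ l ∧
        g = genericPrincMinor s i j - genericPrincMinor s j k
            + genericPrincMinor s k l - genericPrincMinor s l i})
      = s * (s - 3) / 2 := by
  rw [← image_minorMap_altCycles, ← Submodule.map_span, finrank_map_minorMap_span_altCycles,
    finrank_span_altCycles hs, succ_choose_two_sub_two_mul hs]
end
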